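/- arXiv:1611.09656 — 9 statements merged into one kernel-verified Lean document; each statement's English description precedes it below -/
import Mathlib

section
/- Let F be a field of characteristic zero, V a finite-dimensional F-vector space, A an endomorphism of V, b ∈ V and c ∈ V* a linear form. Then d_r(A,b,c) = 0 for every integer r ≥ 1 if and only if c(A^i(b)) = 0 for every integer i ≥ 0. (This identifies the closed stratum of triples with all invariants c(A^i b) zero with the common vanishing locus of all the functions d_r.) -/
/-!
Write `a i = c (A^i b)`. Since `V` is finite-dimensional, the shifted sequences `k ↦ a (n + k)`
are the images of the vectors `A^n b` under a linear map, so some shift lies in the span of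
the earlier ones. For the least such `N` the first `N` shifts are linearly independent and
`a` satisfies a linear recurrence of order `N`. A solution of such a recurrence is determined by
its first `N` terms, and the columns of the `N × N` Hankel matrix are exactly the first `N` terms
of the independent shifts, so `d_N ≠ 0` unless `N = 0`, that is, unless `a = 0`.
-/

open Submodule

section

variable {F : Type*} [Field F]

def hankel (a : ℕ → F) (r : ℕ) : Matrix (Fin r) (Fin r) F :=
  Matrix.of fun i j => a (i + j)

def shiftSeq (a : ℕ → F) (n : ℕ) : ℕ → F :=
  fun k => a (n + k)

theorem linearIndependent_fin_of_forall_notMem_span {M : Type*} [AddCommGroup M] [Module F M]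
    (f : ℕ → M) {N : ℕ} (h : ∀ n < N, f n ∉ span F (Set.range fun m : Fin n => f m)) :
    LinearIndependent F fun m : Fin N => f m := by
  induction N with
  | zero => exact linearIndependent_empty_type
  | succ N ih =>
    have hsnoc : (fun m : Fin (N + 1) => f m) = Fin.snoc (fun m : Fin N => f m) (f N) := by
      funext m
      refine Fin.lastCases ?_ (fun j => ?_) m <;> simp
    rw [hsnoc, linearIndependent_finSnoc]
    exact ⟨ih fun n hn => h n (by omega), h N N.lt_succ_self⟩

theorem LinearRecurrence.IsSolution.shiftSeq {E : LinearRecurrence F} {a : ℕ → F}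
    (ha : E.IsSolution a) (n : ℕ) : E.IsSolution (shiftSeq a n) := by
  intro k
  simp only [_root_.shiftSeq, ← add_assoc]
  exact ha (n + k)

theorem isSolution_of_sum_smul_shiftSeq_eq {a : ℕ → F} {N : ℕ} {coeffs : Fin N → F}
    (h : ∑ m, coeffs m • shiftSeq a m = shiftSeq a N) :
    (LinearRecurrence.mk N coeffs).IsSolution a := by
  intro k
  have := congrFun h k
  simp only [Finset.sum_apply, Pi.smul_apply, smul_eq_mul, shiftSeq] at this
  simp only [add_comm k]
  exact this.symm

theorem hankel_det_ne_zero {a : ℕ → F} {N : ℕ}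
    (hspan : shiftSeq a N ∈ span F (Set.range fun m : Fin N => shiftSeq a m))
    (hli : LinearIndependent F fun m : Fin N => shiftSeq a m) :
    (hankel a N).det ≠ 0 := by
  obtain ⟨coeffs, hcoeffs⟩ := (mem_span_range_iff_exists_fun F).mp hspan
  set E : LinearRecurrence F := ⟨N, coeffs⟩
  have hsol : ∀ m : Fin N, shiftSeq a m ∈ E.solSpace :=
    fun m => (isSolution_of_sum_smul_shiftSeq_eq hcoeffs).shiftSeq m
  have hli_sol : LinearIndependent F fun m : Fin N => (⟨shiftSeq a m, hsol m⟩ : E.solSpace) :=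
    LinearIndependent.of_comp E.solSpace.subtype hli
  have hcols : (hankel a N).col = fun m : Fin N => E.toInit ⟨shiftSeq a m, hsol m⟩ := by
    funext j i
    simp [hankel, shiftSeq, E, LinearRecurrence.toInit, add_comm]
  have hunit : IsUnit (hankel a N) := by
    rw [← Matrix.linearIndependent_cols_iff_isUnit, hcols]
    exact hli_sol.map' E.toInit.toLinearMap E.toInit.ker
  exact ((Matrix.isUnit_iff_isUnit_det _).mp hunit).ne_zero

theorem eq_zero_of_hankel_det_eq_zero {a : ℕ → F}
    (hrec : ∃ n, shiftSeq a n ∈ span F (Set.range fun m : Fin n => shiftSeq a m))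
    (hdet : ∀ r, 1 ≤ r → (hankel a r).det = 0) : a = 0 := by
  classical
  set N := Nat.find hrec
  have hli : LinearIndependent F fun m : Fin N => shiftSeq a m :=
    linearIndependent_fin_of_forall_notMem_span _ fun n hn => Nat.find_min hrec hn
  rcases Nat.eq_zero_or_pos N with hN | hN
  · have h0 : shiftSeq a N ∈ span F (Set.range fun m : Fin N => shiftSeq a m) := Nat.find_spec hrec
    rw [hN, Set.range_eq_empty, span_empty, mem_bot] at h0
    funext k
    simpa [shiftSeq] using congrFun h0 k
  · exact absurd (hdet N hN) (hankel_det_ne_zero (Nat.find_spec hrec) hli)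

theorem exists_shiftSeq_mem_span_of_finiteDimensional {V : Type*} [AddCommGroup V] [Module F V]
    [FiniteDimensional F V] (A : V →ₗ[F] V) (b : V) (c : V →ₗ[F] F) :
    ∃ n, shiftSeq (fun i => c ((A ^ i) b)) n ∈
      span F (Set.range fun m : Fin n => shiftSeq (fun i => c ((A ^ i) b)) m) := by
  by_contra! h
  set φ : V →ₗ[F] ℕ → F := LinearMap.pi fun k => c ∘ₗ A ^ k
  have hφ : ∀ n, φ ((A ^ n) b) = shiftSeq (fun i => c ((A ^ i) b)) n := by
    intro n
    funext k
    simp [φ, shiftSeq, add_comm n k, pow_add]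
  have hli : LinearIndependent F fun m : Fin (Module.finrank F V + 1) => (A ^ (m : ℕ)) b := by
    refine LinearIndependent.of_comp φ ?_
    simpa only [Function.comp_def, hφ] using
      linearIndependent_fin_of_forall_notMem_span _ fun n _ => h n
  simpa using hli.fintype_card_le_finrank

end

theorem stmt_0_general (F : Type*) [Field F]
    (V : Type*) [AddCommGroup V] [Module F V] [FiniteDimensional F V]
    (A : V →ₗ[F] V) (b : V) (c : V →ₗ[F] F) :
    (∀ r : ℕ, 1 ≤ r →
        (Matrix.of fun i j : Fin r => c ((A ^ ((i : ℕ) + (j : ℕ))) b)).det = 0) ↔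
      ∀ i : ℕ, c ((A ^ i) b) = 0 := by
  constructor
  · intro hdet
    exact congrFun (eq_zero_of_hankel_det_eq_zero
      (exists_shiftSeq_mem_span_of_finiteDimensional A b c) hdet)
  · intro hzero r hr
    have : Nonempty (Fin r) := ⟨⟨0, hr⟩⟩
    have hmat : (Matrix.of fun i j : Fin r => c ((A ^ ((i : ℕ) + (j : ℕ))) b)) = 0 := by
      ext i j
      simp [hzero]
    rw [hmat, Matrix.det_zero]

/-- For a triple `(A, b, c)` consisting of an endomorphism `A` of a
finite-dimensional vector space `V` over a field `F` of characteristic zero, a vector `b ∈ V`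
and a linear form `c ∈ V*`, all the invariants
`d_r(A,b,c) = det ((c (A^{i+j} b))_{0 ≤ i,j ≤ r-1})`, `r ≥ 1`, vanish if and only if
`c (A^i b) = 0` for every `i ≥ 0`. -/
theorem stmt_0 (F : Type*) [Field F] [CharZero F]
    (V : Type*) [AddCommGroup V] [Module F V] [FiniteDimensional F V]
    (A : V →ₗ[F] V) (b : V) (c : V →ₗ[F] F) :
    (∀ r : ℕ, 1 ≤ r →
        (Matrix.of fun i j : Fin r => c ((A ^ ((i : ℕ) + (j : ℕ))) b)).det = 0) ↔
      ∀ i : ℕ, c ((A ^ i) b) = 0 :=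
  stmt_0_general F V A b c
end

section
/- Let F be a field of characteristic zero, n₁, n₂ ≥ 1 integers, A₁ an n₁×n₁ matrix and A₂ an n₂×n₂ matrix over F, b₁ ∈ F^{n₁} and b₂ ∈ F^{n₂}. Let n = n₁ + n₂, let A be the block-diagonal matrix with diagonal blocks A₁ and A₂, and let b ∈ F^n be the concatenation of b₁ and b₂. Then det K(A,b) = det K(A₁,b₁) · det K(A₂,b₂) · det(χ_{A₁}(A₂)), where χ_{A₁}(A₂) denotes the n₂×n₂ matrix obtained by evaluating the characteristic polynomial of A₁ at the matrix A₂. -/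
/-- The Krylov matrix `K(A, b)` of an `m × m` matrix `A` and a column vector `b`:
its `j`-th column (`0 ≤ j ≤ m-1`) is `A ^ j *ᵥ b`. -/
def krylov {F : Type*} [CommRing F] {m : ℕ} (A : Matrix (Fin m) (Fin m) F)
    (b : Fin m → F) : Matrix (Fin m) (Fin m) F :=
  Matrix.of fun i j => Matrix.mulVec (A ^ (j : ℕ)) b i

open Polynomial Matrix

private lemma aux_sum_coeff_mulVec {F : Type*} [CommRing F] {m N : ℕ}
    (A : Matrix (Fin m) (Fin m) F) (b : Fin m → F) (p : Polynomial F)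
    (h : p.natDegree < N) (i : Fin m) :
    ∑ k : Fin N, p.coeff k * ((A ^ (k : ℕ)) *ᵥ b) i = ((aeval A p) *ᵥ b) i := by
  rw [Polynomial.aeval_eq_sum_range' h,
    ← Fin.sum_univ_eq_sum_range (fun k => p.coeff k • A ^ k) N]
  simp only [Matrix.mulVec, dotProduct, Matrix.sum_apply, Matrix.smul_apply,
    smul_eq_mul, Finset.sum_mul, Finset.mul_sum]
  rw [Finset.sum_comm]
  simp [mul_assoc]

private lemma aux_fromBlocks_pow {F : Type*} [CommRing F] {a b : ℕ}
    (A : Matrix (Fin a) (Fin a) F) (D : Matrix (Fin b) (Fin b) F) (k : ℕ) :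
    (Matrix.fromBlocks A 0 0 D) ^ k = Matrix.fromBlocks (A ^ k) 0 0 (D ^ k) := by
  induction k with
  | zero => simp [Matrix.fromBlocks_one]
  | succ k ih => simp [pow_succ, ih, Matrix.fromBlocks_multiply]

/-- For a block-diagonal matrix `A = diag(A₁, A₂)` and the concatenation
`b` of `b₁` and `b₂`, one has
`det K(A,b) = det K(A₁,b₁) · det K(A₂,b₂) · det (χ_{A₁}(A₂))`. -/
theorem stmt_2 (F : Type*) [Field F] [CharZero F]
    (n₁ n₂ : ℕ) (h₁ : 1 ≤ n₁) (h₂ : 1 ≤ n₂)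
    (A₁ : Matrix (Fin n₁) (Fin n₁) F) (A₂ : Matrix (Fin n₂) (Fin n₂) F)
    (b₁ : Fin n₁ → F) (b₂ : Fin n₂ → F) :
    (krylov
        (Matrix.reindex finSumFinEquiv finSumFinEquiv (Matrix.fromBlocks A₁ 0 0 A₂))
        (fun i => Sum.elim b₁ b₂ (finSumFinEquiv.symm i))).det =
      (krylov A₁ b₁).det * (krylov A₂ b₂).det *
        (Polynomial.aeval A₂ A₁.charpoly).det := by
  set e : Fin n₁ ⊕ Fin n₂ ≃ Fin (n₁ + n₂) := finSumFinEquiv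
  set χ : Polynomial F := A₁.charpoly with hχ
  set bvec : Fin (n₁ + n₂) → F := fun i => Sum.elim b₁ b₂ (e.symm i) with hbvec
  set M : Matrix (Fin (n₁ + n₂)) (Fin (n₁ + n₂)) F :=
    krylov (Matrix.reindex e e (Matrix.fromBlocks A₁ 0 0 A₂)) bvec with hM
  -- the polynomials giving the column operations
  set p : Fin (n₁ + n₂) → Polynomial F :=
    fun c => if (c : ℕ) < n₁ then X ^ (c : ℕ) else X ^ ((c : ℕ) - n₁) * χ with hp
  have hχdeg : χ.natDegree = n₁ := by
    rw [hχ, Matrix.charpoly_natDegree_eq_dim, Fintype.card_fin]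
  have hχmonic : χ.Monic := Matrix.charpoly_monic A₁
  have hdeg : ∀ c, (p c).natDegree = (c : ℕ) := by
    intro c
    by_cases h : (c : ℕ) < n₁
    · simp [hp, h]
    · simp only [hp, h, if_false]
      rw [Polynomial.natDegree_mul (pow_ne_zero _ Polynomial.X_ne_zero) hχmonic.ne_zero]
      simp [hχdeg]
      omega
  have hmonic : ∀ c, (p c).Monic := by
    intro c
    by_cases h : (c : ℕ) < n₁
    · simp [hp, h, monic_X_pow]
    · simp only [hp, h, if_false]
      exact (monic_X_pow _).mul hχmonic
  set U : Matrix (Fin (n₁ + n₂)) (Fin (n₁ + n₂)) F :=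
    Matrix.of fun k c => (p c).coeff k with hU
  have hUtri : U.BlockTriangular id := by
    intro k c h
    simp only [hU, Matrix.of_apply]
    exact Polynomial.coeff_eq_zero_of_natDegree_lt (by rw [hdeg]; exact_mod_cast h)
  have hUdet : U.det = 1 := by
    rw [Matrix.det_of_upperTriangular hUtri]
    apply Finset.prod_eq_one
    intro c _
    simp only [hU, Matrix.of_apply]
    have := (hmonic c).coeff_natDegree
    rwa [hdeg c] at this
  -- powers of the block matrix
  have hpow : ∀ k : ℕ,
      (Matrix.reindex e e (Matrix.fromBlocks A₁ 0 0 A₂)) ^ k =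
        Matrix.reindex e e (Matrix.fromBlocks (A₁ ^ k) 0 0 (A₂ ^ k)) := by
    intro k
    have : Matrix.reindex e e (Matrix.fromBlocks A₁ 0 0 A₂) =
        Matrix.reindexAlgEquiv F F e (Matrix.fromBlocks A₁ 0 0 A₂) := rfl
    rw [this, ← map_pow, aux_fromBlocks_pow]
    rfl
  have hcol : ∀ k : ℕ, ∀ i,
      ((Matrix.reindex e e (Matrix.fromBlocks A₁ 0 0 A₂)) ^ k *ᵥ bvec) i =
        Sum.elim ((A₁ ^ k) *ᵥ b₁) ((A₂ ^ k) *ᵥ b₂) (e.symm i) := by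
    intro k i
    rw [hpow k]
    have hb : bvec = (Sum.elim b₁ b₂) ∘ ⇑e.symm := rfl
    rw [Matrix.reindex_apply, hb]
    rw [Matrix.submatrix_mulVec_equiv
      (Matrix.fromBlocks (A₁ ^ k) 0 0 (A₂ ^ k)) (Sum.elim b₁ b₂ ∘ ⇑e.symm)
      (⇑e.symm) e.symm]
    have hc : ((Sum.elim b₁ b₂ ∘ ⇑e.symm) ∘ ⇑e.symm.symm) = Sum.elim b₁ b₂ := by
      funext s; simp
    rw [hc, Matrix.fromBlocks_mulVec]
    simp
  -- the key identity : M * U is a reindexed block-lower-triangular matrix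
  set W : Matrix (Fin n₂) (Fin n₁) F :=
    Matrix.of fun i j => ((A₂ ^ (j : ℕ)) *ᵥ b₂) i with hW
  set D : Matrix (Fin n₂) (Fin n₂) F := (aeval A₂ χ) * krylov A₂ b₂ with hD
  have key : M * U =
      Matrix.reindex e e (Matrix.fromBlocks (krylov A₁ b₁) 0 W D) := by
    ext i c
    obtain ⟨s, rfl⟩ : ∃ s, i = e s := ⟨e.symm i, (e.apply_symm_apply i).symm⟩
    obtain ⟨t, rfl⟩ : ∃ t, c = e t := ⟨e.symm c, (e.apply_symm_apply c).symm⟩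
    have hMe : ∀ k : Fin (n₁ + n₂),
        M (e s) k = Sum.elim ((A₁ ^ (k : ℕ)) *ᵥ b₁) ((A₂ ^ (k : ℕ)) *ᵥ b₂) s := by
      intro k
      simp only [hM, krylov, Matrix.of_apply]
      rw [hcol (k : ℕ) (e s), Equiv.symm_apply_apply]
    have hdeglt : (p (e t)).natDegree < n₁ + n₂ := by rw [hdeg]; exact (e t).isLt
    have hmul : (M * U) (e s) (e t) =
        ∑ k : Fin (n₁ + n₂), (p (e t)).coeff k *
          Sum.elim ((A₁ ^ (k : ℕ)) *ᵥ b₁) ((A₂ ^ (k : ℕ)) *ᵥ b₂) s := by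
      rw [Matrix.mul_apply]
      refine Finset.sum_congr rfl fun k _ => ?_
      rw [hMe k]
      simp only [hU, Matrix.of_apply]
      ring
    rw [hmul]
    rw [Matrix.reindex_apply, Matrix.submatrix_apply, Equiv.symm_apply_apply,
      Equiv.symm_apply_apply]
    cases s with
    | inl i₁ =>
      have := aux_sum_coeff_mulVec A₁ b₁ (p (e t)) hdeglt i₁
      simp only [Sum.elim_inl]
      rw [this]
      cases t with
      | inl j₁ =>
        have hct : ((e (Sum.inl j₁) : Fin (n₁ + n₂)) : ℕ) = (j₁ : ℕ) := by
          simp [e, finSumFinEquiv_apply_left]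
        have hpc : p (e (Sum.inl j₁)) = X ^ (j₁ : ℕ) := by
          simp [hp, hct, j₁.isLt]
        rw [hpc]
        simp [krylov, Matrix.fromBlocks_apply₁₁, aeval_X_pow]
      | inr j₂ =>
        have hct : ((e (Sum.inr j₂) : Fin (n₁ + n₂)) : ℕ) = n₁ + (j₂ : ℕ) := by
          simp [e, finSumFinEquiv_apply_right]
        have hpc : p (e (Sum.inr j₂)) = X ^ (j₂ : ℕ) * χ := by
          simp only [hp, hct]
          rw [if_neg (by omega)]
          congr 1
          congr 1
          omega
        rw [hpc, _root_.map_mul]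
        simp [hχ, Matrix.aeval_self_charpoly]
    | inr i₂ =>
      have := aux_sum_coeff_mulVec A₂ b₂ (p (e t)) hdeglt i₂
      simp only [Sum.elim_inr]
      rw [this]
      cases t with
      | inl j₁ =>
        have hct : ((e (Sum.inl j₁) : Fin (n₁ + n₂)) : ℕ) = (j₁ : ℕ) := by
          simp [e, finSumFinEquiv_apply_left]
        have hpc : p (e (Sum.inl j₁)) = X ^ (j₁ : ℕ) := by
          simp [hp, hct, j₁.isLt]
        rw [hpc]
        simp [hW, Matrix.fromBlocks_apply₂₁, aeval_X_pow]
      | inr j₂ =>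
        have hct : ((e (Sum.inr j₂) : Fin (n₁ + n₂)) : ℕ) = n₁ + (j₂ : ℕ) := by
          simp [e, finSumFinEquiv_apply_right]
        have hpc : p (e (Sum.inr j₂)) = χ * X ^ (j₂ : ℕ) := by
          simp only [hp, hct]
          rw [if_neg (by omega), mul_comm]
          congr 2
          omega
        rw [hpc, _root_.map_mul, aeval_X_pow, ← Matrix.mulVec_mulVec]
        simp only [Matrix.fromBlocks_apply₂₂, hD]
        rw [Matrix.mul_apply]
        simp [Matrix.mulVec, dotProduct, krylov]
  -- conclude
  have hdetM : M.det = M.det * U.det := by rw [hUdet, mul_one]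
  rw [show (krylov
        (Matrix.reindex finSumFinEquiv finSumFinEquiv (Matrix.fromBlocks A₁ 0 0 A₂))
        (fun i => Sum.elim b₁ b₂ (finSumFinEquiv.symm i))).det = M.det from rfl]
  rw [hdetM, ← Matrix.det_mul, key, Matrix.det_reindex_self,
    Matrix.det_fromBlocks_zero₁₂, hD, Matrix.det_mul]
  ring
end

section
/- Let F be a field of characteristic zero, V⁺ and V⁻ finite-dimensional F-vector spaces with dim V⁺ = r ≥ 1. Let (A,b,c) ∈ End(V⁺) × V⁺ × (V⁺)* with d_r(A,b,c) ≠ 0, and let b' ∈ V⁺ and c' ∈ (V⁺)* be the unique elements satisfying c(A^i(b')) = 0 for 0 ≤ i ≤ r-2 and c(A^{r-1}(b')) = 1, respectively c'(A^i(b)) = 0 for 0 ≤ i ≤ r-2 and c'(A^{r-1}(b)) = 1 (they exist and are unique because d_r(A,b,c) ≠ 0). Let (B,v,w) ∈ End(V⁻) × V⁻ × (V⁻)*. Define Z ∈ End(V⁺ ⊕ V⁻) by Z(x,y) = (A(x) + w(y)·b', c'(x)·v + B(y)), and set b̃ = (b,0) ∈ V⁺ ⊕ V⁻ and c̃ ∈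 (V⁺ ⊕ V⁻)* given by c̃(x,y) = c(x). Then for every integer k ≥ 0 one has d_{r+k}(Z, b̃, c̃) = d_r(A,b,c) · d_k(B,v,w). -/
open Finset in
lemma helper_sum {F : Type*} [Field F] {M : Type*} [AddCommGroup M] [Module F M]
    (p : ℕ → F) (r k m : ℕ) (hm : m < k) (X : ℕ → M) :
    ∑ t ∈ Finset.range r, p t • X (m + t)
      = (∑ j : Fin r, (if m ≤ (j : ℕ) then p ((j : ℕ) - m) else 0) • X j)
        + ∑ m' : Fin k, (if (m' : ℕ) < m ∧ m ≤ r + (m' : ℕ) then p (r + (m' : ℕ) - m) else 0) • X (r + (m' : ℕ)) := by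
  rw [Fin.sum_univ_eq_sum_range (fun j => (if m ≤ j then p (j - m) else 0) • X j),
    Fin.sum_univ_eq_sum_range (fun m' => (if m' < m ∧ m ≤ r + m' then p (r + m' - m) else 0) • X (r + m'))]
  have key : ∀ t ∈ Finset.range r, p t • X (m + t) =
      (if m + t < r then p t else 0) • X (m + t) + (if r ≤ m + t then p t else 0) • X (m + t) := by
    intro t ht; split_ifs with h1 h2 h2 <;> simp <;> omega
  rw [Finset.sum_congr rfl key, Finset.sum_add_distrib]
  congr 1
  · -- Σ_{t<r} ite (m+t<r) (p t) 0 • X (m+t) = Σ_{j<r} ite (m≤j) (p (j-m)) 0 • X j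
    simp only [ite_smul, zero_smul]
    rw [Finset.sum_ite, Finset.sum_const_zero, Finset.sum_ite, Finset.sum_const_zero, add_zero, add_zero]
    apply Finset.sum_nbij' (i := fun t => m + t) (j := fun j => j - m)
    · intro t ht; simp only [mem_filter, mem_range] at *; omega
    · intro j hj; simp only [mem_filter, mem_range] at *; omega
    · intro t ht; simp only [mem_filter, mem_range] at *; omega
    · intro j hj; simp only [mem_filter, mem_range] at *; omega
    · intro t ht; simp only [mem_filter, mem_range] at *
      have h2 : m + t - m = t := by omega
      rw [h2]
  · simp only [ite_smul, zero_smul]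
    rw [Finset.sum_ite, Finset.sum_const_zero, Finset.sum_ite, Finset.sum_const_zero, add_zero, add_zero]
    apply Finset.sum_nbij' (i := fun t => m + t - r) (j := fun m' => r + m' - m)
    · intro t ht; simp only [mem_filter, mem_range] at *; omega
    · intro j hj; simp only [mem_filter, mem_range] at *; omega
    · intro t ht; simp only [mem_filter, mem_range] at *; omega
    · intro j hj; simp only [mem_filter, mem_range] at *; omega
    · intro t ht; simp only [mem_filter, mem_range] at *
      have h2 : r + (m + t - r) - m = t := by omega
      have h1 : r + (m + t - r) = m + t := by omega
      rw [h2, h1]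


open Finset in
lemma helper_cut {M : Type*} [AddCommMonoid M] (k n : ℕ) (hn : n < k) (f : ℕ → M) :
    ∑ b : Fin k, (if (b : ℕ) ≤ n then f b else 0) = ∑ b ∈ Finset.range (n + 1), f b := by
  rw [Fin.sum_univ_eq_sum_range (fun b => if b ≤ n then f b else 0)]
  rw [← Finset.sum_subset (Finset.range_subset_range.2 (by omega : n + 1 ≤ k))
      (fun x _ hx => by rw [if_neg (by simp at hx ⊢; omega)])]
  exact Finset.sum_congr rfl fun x hx => if_pos (by simp at hx; omega)


/-- The invariant `d_r(A, b, c) = det ((c (A^{i+j} b))_{0 ≤ i,j ≤ r-1})`. -/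
def dLin (F : Type*) [Field F] {V : Type*} [AddCommGroup V] [Module F V]
    (r : ℕ) (A : V →ₗ[F] V) (b : V) (c : V →ₗ[F] F) : F :=
  (Matrix.of fun i j : Fin r => c ((A ^ ((i : ℕ) + (j : ℕ))) b)).det

set_option maxHeartbeats 1000000 in
/-- With `dim V⁺ = r ≥ 1`, `d_r(A,b,c) ≠ 0`, and `b'`, `c'` the (unique)
elements with `c (A^i b') = δ_{i,r-1}` and `c' (A^i b) = δ_{i,r-1}` for `0 ≤ i ≤ r-1`,
the endomorphism `Z (x, y) = (A x + w y • b', c' x • v + B y)` of `V⁺ ⊕ V⁻`, together with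
`b̃ = (b, 0)` and `c̃ (x, y) = c x`, satisfies
`d_{r+k}(Z, b̃, c̃) = d_r(A,b,c) · d_k(B,v,w)` for every `k ≥ 0`. -/
theorem stmt_4 (F : Type*) [Field F] [CharZero F]
    (Vp Vm : Type*) [AddCommGroup Vp] [Module F Vp] [FiniteDimensional F Vp]
    [AddCommGroup Vm] [Module F Vm] [FiniteDimensional F Vm]
    (r : ℕ) (hr : 1 ≤ r) (hdim : Module.finrank F Vp = r)
    (A : Vp →ₗ[F] Vp) (b : Vp) (c : Vp →ₗ[F] F)
    (hd : dLin F r A b c ≠ 0)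
    (b' : Vp) (hb' : ∀ i < r, c ((A ^ i) b') = if i = r - 1 then 1 else 0)
    (c' : Vp →ₗ[F] F) (hc' : ∀ i < r, c' ((A ^ i) b) = if i = r - 1 then 1 else 0)
    (B : Vm →ₗ[F] Vm) (v : Vm) (w : Vm →ₗ[F] F) (k : ℕ) :
    dLin F (r + k)
        (LinearMap.prod
          (A ∘ₗ LinearMap.fst F Vp Vm + (w ∘ₗ LinearMap.snd F Vp Vm).smulRight b')
          ((c' ∘ₗ LinearMap.fst F Vp Vm).smulRight v + B ∘ₗ LinearMap.snd F Vp Vm))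
        (b, 0) (c ∘ₗ LinearMap.fst F Vp Vm) =
      dLin F r A b c * dLin F k B v w := by
  classical
  haveI : Nonempty (Fin r) := ⟨⟨0, hr⟩⟩
  set Z : Vp × Vm →ₗ[F] Vp × Vm :=
    LinearMap.prod
      (A ∘ₗ LinearMap.fst F Vp Vm + (w ∘ₗ LinearMap.snd F Vp Vm).smulRight b')
      ((c' ∘ₗ LinearMap.fst F Vp Vm).smulRight v + B ∘ₗ LinearMap.snd F Vp Vm) with hZdef
  set ct : Vp × Vm →ₗ[F] F := c ∘ₗ LinearMap.fst F Vp Vm with hctdef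
  set bt : Vp × Vm := (b, (0 : Vm)) with hbtdef
  clear_value Z ct bt
  -- basic action of Z
  have hZap : ∀ (x : Vp) (y : Vm), Z (x, y) = (A x + w y • b', c' x • v + B y) := by
    intro x y
    rw [hZdef]
    simp [LinearMap.prod_apply, LinearMap.add_apply, LinearMap.comp_apply,
      LinearMap.smulRight_apply, LinearMap.fst_apply, LinearMap.snd_apply]
  -- the matrix M0 and its invertibility
  set M0 : Matrix (Fin r) (Fin r) F :=
    Matrix.of (fun i j : Fin r => c ((A ^ ((i : ℕ) + (j : ℕ))) b)) with hM0def
  have hM0 : IsUnit M0.det := isUnit_iff_ne_zero.2 hd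
  clear_value M0
  -- span and dual representation
  have hpowapp : ∀ (i j : ℕ), (A ^ i) ((A ^ j) b) = (A ^ (i + j)) b := by
    intro i j
    rw [pow_add, Module.End.mul_apply]
  have hli : LinearIndependent F (fun j : Fin r => (A ^ (j : ℕ)) b) := by
    rw [Fintype.linearIndependent_iff]
    intro g hg j
    have hmv : M0.mulVec g = 0 := by
      funext i
      have := congrArg (fun u => c ((A ^ (i : ℕ)) u)) hg
      simp only [map_sum, map_smul, map_zero] at this
      simpa [Matrix.mulVec, dotProduct, hM0def, hpowapp, mul_comm, smul_eq_mul]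
        using this
    have : g = 0 := by
      have h2 := congrArg (fun u => M0⁻¹.mulVec u) hmv
      simpa [Matrix.mulVec_mulVec, Matrix.nonsing_inv_mul M0 hM0] using h2
    exact congrFun this j
  have hspan : ∀ u : Vp, ∃ g : Fin r → F, u = ∑ j : Fin r, g j • (A ^ (j : ℕ)) b := by
    intro u
    have hsp : Submodule.span F (Set.range (fun j : Fin r => (A ^ (j : ℕ)) b)) = ⊤ :=
      hli.span_eq_top_of_card_eq_finrank (by simp [hdim])
    have hu : u ∈ Submodule.span F (Set.range (fun j : Fin r => (A ^ (j : ℕ)) b)) := by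
      rw [hsp]; trivial
    obtain ⟨g, hg⟩ := (Submodule.mem_span_range_iff_exists_fun F).1 hu
    exact ⟨g, hg.symm⟩
  have hdual : ∀ θ : Vp →ₗ[F] F, ∃ g : Fin r → F,
      ∀ x : Vp, θ x = ∑ i : Fin r, g i * c ((A ^ (i : ℕ)) x) := by
    intro θ
    set gv : Fin r → F := fun j => θ ((A ^ (j : ℕ)) b) with hgv
    refine ⟨Matrix.vecMul gv M0⁻¹, ?_⟩
    have hμ : ∀ j : Fin r, (∑ i : Fin r, Matrix.vecMul gv M0⁻¹ i * M0 i j) = gv j := by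
      intro j
      have : Matrix.vecMul (Matrix.vecMul gv M0⁻¹) M0 = gv := by
        rw [Matrix.vecMul_vecMul, Matrix.nonsing_inv_mul M0 hM0, Matrix.vecMul_one]
      have := congrFun this j
      simpa [Matrix.vecMul, dotProduct] using this
    intro x
    obtain ⟨g, hg⟩ := hspan x
    rw [hg, map_sum]
    have hrhs : ∀ i : Fin r, c ((A ^ (i : ℕ)) (∑ j : Fin r, g j • (A ^ (j : ℕ)) b))
        = ∑ j : Fin r, g j * M0 i j := by
      intro i
      simp [map_sum, map_smul, hpowapp, hM0def, smul_eq_mul]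
    calc ∑ j : Fin r, θ (g j • (A ^ (j : ℕ)) b) = ∑ j : Fin r, g j * gv j := by
          simp [hgv, smul_eq_mul]
      _ = ∑ j : Fin r, g j * ∑ i : Fin r, Matrix.vecMul gv M0⁻¹ i * M0 i j := by
          simp only [hμ]
      _ = ∑ i : Fin r, Matrix.vecMul gv M0⁻¹ i * c ((A ^ (i : ℕ))
            (∑ j : Fin r, g j • (A ^ (j : ℕ)) b)) := by
          simp only [hrhs, Finset.mul_sum, Finset.sum_mul]
          rw [Finset.sum_comm]
          apply Finset.sum_congr rfl; intros; apply Finset.sum_congr rfl; intros; ring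
  -- powers of Z on bt
  have L1 : ∀ j < r, (Z ^ j) bt = ((A ^ j) b, (0 : Vm)) := by
    intro j hj
    induction j with
    | zero => simp [hbtdef]
    | succ n ih =>
      rw [pow_succ', Module.End.mul_apply, ih (by omega), hZap]
      have h0 : c' ((A ^ n) b) = 0 := by rw [hc' n (by omega), if_neg (by omega)]
      rw [h0]
      have h1 : A ((A ^ n) b) = (A ^ (n + 1)) b := by
        rw [pow_succ', Module.End.mul_apply]
      simp [h1]
  have L2 : ∀ i < r, ∀ (x : Vp) (y : Vm), ct ((Z ^ i) (x, y)) = c ((A ^ i) x) := by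
    intro i hi
    induction i with
    | zero => intro x y; simp [hctdef]
    | succ n ih =>
      intro x y
      rw [pow_succ, Module.End.mul_apply, hZap, ih (by omega)]
      have h0 : c ((A ^ n) b') = 0 := by rw [hb' n (by omega), if_neg (by omega)]
      have h1 : (A ^ n) (A x) = (A ^ (n + 1)) x := by
        rw [pow_succ, Module.End.mul_apply]
      simp [map_add, map_smul, h0, h1, smul_eq_mul]
  -- Cayley-Hamilton
  obtain ⟨p, hp⟩ : ∃ p : ℕ → F, (A ^ r : Vp →ₗ[F] Vp) = ∑ j ∈ Finset.range r, p j • A ^ j := by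
    have h0 := LinearMap.aeval_self_charpoly A
    have hdeg : A.charpoly.natDegree = r := by rw [A.charpoly_natDegree, hdim]
    have hmon : A.charpoly.Monic := A.charpoly_monic
    have h1 : A.charpoly.coeff r = 1 := by rw [← hdeg]; exact hmon.coeff_natDegree
    refine ⟨fun j => -(A.charpoly.coeff j), ?_⟩
    have hsum : (Polynomial.aeval A) A.charpoly
        = ∑ i ∈ Finset.range (r + 1), A.charpoly.coeff i • A ^ i := by
      rw [← hdeg]; exact Polynomial.aeval_eq_sum_range A
    rw [h0, Finset.sum_range_succ, h1, one_smul] at hsum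
    have h2 : A ^ r = -∑ i ∈ Finset.range r, A.charpoly.coeff i • A ^ i :=
      eq_neg_of_add_eq_zero_left (by rw [add_comm]; exact hsum.symm)
    rw [h2, ← Finset.sum_neg_distrib]
    exact Finset.sum_congr rfl fun i _ => (neg_smul _ _).symm
  have F1 : (Z ^ r) bt = ((0 : Vp), v) + ∑ j ∈ Finset.range r, p j • (Z ^ j) bt := by
    obtain ⟨r', hr'⟩ : ∃ r', r = r' + 1 := ⟨r - 1, by omega⟩
    have h1 : (Z ^ r) bt = Z ((A ^ r') b, (0 : Vm)) := by
      rw [hr', pow_succ', Module.End.mul_apply, L1 r' (by omega)]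
    have hcv : c' ((A ^ r') b) = 1 := by rw [hc' r' (by omega), if_pos (by omega)]
    have h2 : ∑ j ∈ Finset.range r, p j • (Z ^ j) bt
        = ((∑ j ∈ Finset.range r, p j • (A ^ j) b : Vp), (0 : Vm)) := by
      rw [Finset.sum_congr rfl (fun j hj => by rw [L1 j (Finset.mem_range.1 hj)])]
      rw [Prod.ext_iff]
      constructor
      · simp [Prod.fst_sum]
      · simp [Prod.snd_sum]
    have h3 : (∑ j ∈ Finset.range r, p j • (A ^ j) b) = (A ^ r) b := by
      rw [hp]; simp [LinearMap.sum_apply, LinearMap.smul_apply]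
    rw [h1, hZap, hcv, h2, h3]
    have h4 : A ((A ^ r') b) = (A ^ r) b := by
      rw [hr', pow_succ', Module.End.mul_apply]
    rw [Prod.ext_iff]
    constructor
    · simp [h4]
    · simp
  have F2 : ∀ (x : Vp) (y : Vm),
      ct ((Z ^ r) (x, y)) = w y + ∑ j ∈ Finset.range r, p j * ct ((Z ^ j) (x, y)) := by
    intro x y
    obtain ⟨r', hr'⟩ : ∃ r', r = r' + 1 := ⟨r - 1, by omega⟩
    have h1 : ct ((Z ^ r) (x, y)) = c ((A ^ r') (A x + w y • b')) := by
      rw [hr', pow_succ, Module.End.mul_apply, hZap]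
      exact L2 r' (by omega) _ _
    have hbv : c ((A ^ r') b') = 1 := by rw [hb' r' (by omega), if_pos (by omega)]
    have h4 : (A ^ r') (A x) = (A ^ r) x := by
      rw [hr', pow_succ, Module.End.mul_apply]
    have h2 : ct ((Z ^ r) (x, y)) = c ((A ^ r) x) + w y := by
      rw [h1, map_add, map_smul, map_add, map_smul, hbv, h4, smul_eq_mul, mul_one]
    have h3 : ∑ j ∈ Finset.range r, p j * ct ((Z ^ j) (x, y)) = c ((A ^ r) x) := by
      rw [Finset.sum_congr rfl (fun j hj => by rw [L2 j (Finset.mem_range.1 hj) x y]), hp]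
      simp [LinearMap.sum_apply, LinearMap.smul_apply, map_sum, smul_eq_mul]
    rw [h2, h3, add_comm]
  -- representing sequences
  choose lam hlam using fun n : ℕ => hspan (((Z ^ n) ((0 : Vp), v)).1)
  have hmu' : ∀ m : ℕ, ∃ g : Fin r → F, ∀ x : Vp,
      w (((Z ^ m) (x, (0 : Vm))).2) = ∑ i : Fin r, g i * c ((A ^ (i : ℕ)) x) := by
    intro m
    exact hdual (w ∘ₗ LinearMap.snd F Vp Vm ∘ₗ (Z ^ m) ∘ₗ LinearMap.inl F Vp Vm)
  choose mu hmu using hmu'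
  have hZap' : ∀ q : Vp × Vm, Z q = (A q.1 + w q.2 • b', c' q.1 • v + B q.2) :=
    fun q => hZap q.1 q.2
  -- the convolution coefficient sequences
  set e : ℕ → F := fun d => if d = 0 then 1 else c' (((Z ^ (d - 1)) ((0 : Vp), v)).1) with hedef
  set e' : ℕ → F := fun d => if d = 0 then 1 else w (((Z ^ (d - 1)) (b', (0 : Vm))).2) with he'def
  clear_value e e'
  have L5 : ∀ n : ℕ, ((Z ^ n) ((0 : Vp), v)).2
      = ∑ d ∈ Finset.range (n + 1), e d • (B ^ (n - d)) v := by
    intro n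
    induction n with
    | zero => simp [hedef]
    | succ n ih =>
      have h1 : ((Z ^ (n + 1)) ((0 : Vp), v)).2
          = c' (((Z ^ n) ((0 : Vp), v)).1) • v + B (((Z ^ n) ((0 : Vp), v)).2) := by
        rw [pow_succ', Module.End.mul_apply, hZap']
      rw [h1, ih, map_sum]
      have he1 : e (n + 1) = c' (((Z ^ n) ((0 : Vp), v)).1) := by simp [hedef]
      have hterm : ∀ d ∈ Finset.range (n + 1),
          B (e d • (B ^ (n - d)) v) = e d • (B ^ (n + 1 - d)) v := by
        intro d hd
        rw [map_smul]
        congr 1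
        have : (B ^ (n + 1 - d)) = B * B ^ (n - d) := by
          rw [← pow_succ']
          congr 1
          simp at hd
          omega
        rw [this, Module.End.mul_apply]
      rw [Finset.sum_congr rfl hterm]
      conv_rhs => rw [Finset.sum_range_succ]
      rw [he1]
      simp [add_comm]
  have L6 : ∀ (m : ℕ) (y : Vm), w (((Z ^ m) ((0 : Vp), y)).2)
      = ∑ d ∈ Finset.range (m + 1), e' d * w ((B ^ (m - d)) y) := by
    intro m
    induction m with
    | zero => intro y; simp [he'def]
    | succ m ih =>
      intro y
      have h1 : (Z ^ (m + 1)) ((0 : Vp), y) = (Z ^ m) ((w y • b' : Vp), B y) := by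
        rw [pow_succ, Module.End.mul_apply, hZap]
        simp
      have h2 : ((w y • b' : Vp), B y) = w y • ((b', (0 : Vm))) + (((0 : Vp), B y)) := by
        rw [Prod.ext_iff]; constructor <;> simp
      have h3 : w (((Z ^ (m + 1)) ((0 : Vp), y)).2)
          = w y * w (((Z ^ m) (b', (0 : Vm))).2) + w (((Z ^ m) ((0 : Vp), B y)).2) := by
        rw [h1, h2, map_add, map_smul]
        simp [smul_eq_mul]
      rw [h3, ih (B y)]
      have he1 : e' (m + 1) = w (((Z ^ m) (b', (0 : Vm))).2) := by simp [he'def]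
      have hterm : ∀ d ∈ Finset.range (m + 1),
          e' d * w ((B ^ (m - d)) (B y)) = e' d * w ((B ^ (m + 1 - d)) y) := by
        intro d hd
        congr 2
        have : (B ^ (m + 1 - d)) = B ^ (m - d) * B := by
          rw [← pow_succ]
          congr 1
          simp at hd
          omega
        rw [this, Module.End.mul_apply]
      rw [Finset.sum_congr rfl hterm]
      conv_rhs => rw [Finset.sum_range_succ]
      rw [he1]
      simp [add_comm, mul_comm]
  -- matrices
  set η : ℕ → Vm := fun n => ((Z ^ n) ((0 : Vp), v)).2 with hηdef
  set idx : Fin r ⊕ Fin k → ℕ := Sum.elim (fun i => (i : ℕ)) (fun m => r + (m : ℕ)) with hidxdef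
  set H' : Matrix (Fin r ⊕ Fin k) (Fin r ⊕ Fin k) F :=
    Matrix.of (fun a b'' => ct ((Z ^ (idx a + idx b'')) bt)) with hH'def
  set P21 : Matrix (Fin k) (Fin r) F :=
    Matrix.of (fun m j => -(if (m : ℕ) ≤ (j : ℕ) then p ((j : ℕ) - (m : ℕ)) else 0) - mu m j) with hP21def
  set P22 : Matrix (Fin k) (Fin k) F :=
    Matrix.of (fun m m' => (if m' = m then (1 : F) else 0)
      - (if (m' : ℕ) < (m : ℕ) ∧ (m : ℕ) ≤ r + (m' : ℕ) then p (r + (m' : ℕ) - (m : ℕ)) else 0)) with hP22def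
  set Q12 : Matrix (Fin r) (Fin k) F :=
    Matrix.of (fun j n => -(if (n : ℕ) ≤ (j : ℕ) then p ((j : ℕ) - (n : ℕ)) else 0) - lam n j) with hQ12def
  set Q22 : Matrix (Fin k) (Fin k) F :=
    Matrix.of (fun n' n => (if n' = n then (1 : F) else 0)
      - (if (n' : ℕ) < (n : ℕ) ∧ (n : ℕ) ≤ r + (n' : ℕ) then p (r + (n' : ℕ) - (n : ℕ)) else 0)) with hQ22def
  set P : Matrix (Fin r ⊕ Fin k) (Fin r ⊕ Fin k) F := Matrix.fromBlocks 1 0 P21 P22 with hPdef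
  set Q : Matrix (Fin r ⊕ Fin k) (Fin r ⊕ Fin k) F := Matrix.fromBlocks 1 Q12 0 Q22 with hQdef
  clear_value η idx H' P21 P22 Q12 Q22 P Q
  have hpowZ : ∀ (i j : ℕ) (q : Vp × Vm), (Z ^ i) ((Z ^ j) q) = (Z ^ (i + j)) q := by
    intro i j q
    rw [← Module.End.mul_apply, ← pow_add]
  have L2' : ∀ i < r, ∀ q : Vp × Vm, ct ((Z ^ i) q) = c ((A ^ i) q.1) :=
    fun i hi q => L2 i hi q.1 q.2
  have F2' : ∀ q : Vp × Vm,
      ct ((Z ^ r) q) = w q.2 + ∑ j ∈ Finset.range r, p j * ct ((Z ^ j) q) :=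
    fun q => F2 q.1 q.2
  -- column identity
  have G2 : ∀ n : Fin k,
      ((∑ j : Fin r, Q12 j n • (Z ^ (j : ℕ)) bt)
        + ∑ n' : Fin k, Q22 n' n • (Z ^ (r + (n' : ℕ))) bt) = ((0 : Vp), η (n : ℕ)) := by
    intro n
    have key := helper_sum p r k (n : ℕ) n.2 (fun t => (Z ^ t) bt)
    have hA : (Z ^ (r + (n : ℕ))) bt
        = (Z ^ (n : ℕ)) ((0 : Vp), v) + ∑ t ∈ Finset.range r, p t • (Z ^ ((n : ℕ) + t)) bt := by
      have hF := congrArg (fun q => (Z ^ (n : ℕ)) q) F1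
      simp only [map_add, map_sum, map_smul] at hF
      calc (Z ^ (r + (n : ℕ))) bt = (Z ^ (n : ℕ)) ((Z ^ r) bt) := by
            rw [hpowZ, add_comm]
        _ = _ := by
            rw [hF]
            congr 1
            apply Finset.sum_congr rfl
            intro t ht
            rw [hpowZ, add_comm]
    have hB : (∑ j : Fin r, lam (n : ℕ) j • (Z ^ (j : ℕ)) bt)
        = (((Z ^ ((n : ℕ))) ((0 : Vp), v)).1, (0 : Vm)) := by
      rw [Finset.sum_congr rfl (fun j _ => by rw [L1 (j : ℕ) j.2])]
      rw [Prod.ext_iff]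
      constructor
      · simp only [Prod.fst_sum, Prod.smul_mk]
        exact (hlam _).symm
      · simp [Prod.snd_sum]
    calc (∑ j : Fin r, Q12 j n • (Z ^ (j : ℕ)) bt)
          + ∑ n' : Fin k, Q22 n' n • (Z ^ (r + (n' : ℕ))) bt
        = (Z ^ (r + (n : ℕ))) bt - (∑ t ∈ Finset.range r, p t • (Z ^ ((n : ℕ) + t)) bt)
          - ∑ j : Fin r, lam (n : ℕ) j • (Z ^ (j : ℕ)) bt := by
          simp only [hQ12def, hQ22def, Matrix.of_apply, sub_smul, neg_smul, ite_smul, one_smul,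
            zero_smul, Finset.sum_sub_distrib, Finset.sum_neg_distrib]
          rw [Finset.sum_ite_eq' Finset.univ n (fun n' => (Z ^ (r + (n' : ℕ))) bt),
            if_pos (Finset.mem_univ n), key]
          simp only [ite_smul, zero_smul]
          abel
      _ = (Z ^ (n : ℕ)) ((0 : Vp), v) - (((Z ^ ((n : ℕ))) ((0 : Vp), v)).1, (0 : Vm)) := by
          rw [hA, hB]
          abel
      _ = ((0 : Vp), η (n : ℕ)) := by
          rw [Prod.ext_iff]
          constructor
          · simp
          · simp [hηdef]
  -- row identity
  have G1 : ∀ (m : Fin k) (V : Vp × Vm),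
      ((∑ j : Fin r, P21 m j * ct ((Z ^ (j : ℕ)) V))
        + ∑ m' : Fin k, P22 m m' * ct ((Z ^ (r + (m' : ℕ))) V))
      = w (((Z ^ (m : ℕ)) ((0 : Vp), V.2)).2) := by
    intro m V
    have key : ∑ t ∈ Finset.range r, p t * ct ((Z ^ ((m : ℕ) + t)) V)
        = (∑ j : Fin r, (if (m : ℕ) ≤ (j : ℕ) then p ((j : ℕ) - (m : ℕ)) else 0) * ct ((Z ^ (j : ℕ)) V))
          + ∑ m' : Fin k, (if (m' : ℕ) < (m : ℕ) ∧ (m : ℕ) ≤ r + (m' : ℕ) then p (r + (m' : ℕ) - (m : ℕ)) else 0)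
              * ct ((Z ^ (r + (m' : ℕ))) V) := by
      simpa [smul_eq_mul] using helper_sum p r k (m : ℕ) m.2 (fun t => ct ((Z ^ t) V))
    have hA : ct ((Z ^ (r + (m : ℕ))) V)
        = w (((Z ^ (m : ℕ)) V).2) + ∑ t ∈ Finset.range r, p t * ct ((Z ^ ((m : ℕ) + t)) V) := by
      have h := F2' ((Z ^ (m : ℕ)) V)
      calc ct ((Z ^ (r + (m : ℕ))) V) = ct ((Z ^ r) ((Z ^ (m : ℕ)) V)) := by rw [hpowZ]
        _ = _ := by
            rw [h]
            congr 1
            apply Finset.sum_congr rfl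
            intro t ht
            rw [hpowZ, add_comm]
    have hsplit : w (((Z ^ (m : ℕ)) V).2)
        = w (((Z ^ (m : ℕ)) (V.1, (0 : Vm))).2) + w (((Z ^ (m : ℕ)) ((0 : Vp), V.2)).2) := by
      have hdec : ((V.1, (0 : Vm)) : Vp × Vm) + (((0 : Vp), V.2) : Vp × Vm) = V := by
        rw [Prod.ext_iff]; constructor <;> simp
      conv_lhs => rw [← hdec]
      rw [map_add, Prod.snd_add, map_add]
    calc (∑ j : Fin r, P21 m j * ct ((Z ^ (j : ℕ)) V))
          + ∑ m' : Fin k, P22 m m' * ct ((Z ^ (r + (m' : ℕ))) V)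
        = ct ((Z ^ (r + (m : ℕ))) V) - (∑ t ∈ Finset.range r, p t * ct ((Z ^ ((m : ℕ) + t)) V))
          - ∑ i : Fin r, mu (m : ℕ) i * ct ((Z ^ (i : ℕ)) V) := by
          simp only [hP21def, hP22def, Matrix.of_apply, sub_mul, neg_mul, ite_mul, one_mul,
            zero_mul, Finset.sum_sub_distrib, Finset.sum_neg_distrib]
          rw [Finset.sum_ite_eq' Finset.univ m (fun m' => ct ((Z ^ (r + (m' : ℕ))) V)),
            if_pos (Finset.mem_univ m), key]
          simp only [ite_mul, zero_mul]
          ring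
      _ = w (((Z ^ (m : ℕ)) V).2) - ∑ i : Fin r, mu (m : ℕ) i * ct ((Z ^ (i : ℕ)) V) := by
          rw [hA]; ring
      _ = w (((Z ^ (m : ℕ)) ((0 : Vp), V.2)).2) := by
          rw [Finset.sum_congr rfl (fun i _ => by rw [L2' (i : ℕ) i.2 V]),
            ← hmu (m : ℕ) V.1, hsplit]
          ring
  set N0 : Matrix (Fin k) (Fin k) F :=
    Matrix.of (fun m n => ∑ d ∈ Finset.range ((m : ℕ) + 1), ∑ q ∈ Finset.range ((n : ℕ) + 1),
      e' d * (e q * w ((B ^ (((m : ℕ) - d) + ((n : ℕ) - q))) v))) with hN0def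
  clear_value N0
  have hBpow : ∀ (i j : ℕ), (B ^ i) ((B ^ j) v) = (B ^ (i + j)) v := by
    intro i j
    rw [← Module.End.mul_apply, ← pow_add]
  have hHb : ∀ a t : Fin r ⊕ Fin k, H' a t = ct ((Z ^ idx a) ((Z ^ idx t) bt)) := by
    intro a t
    rw [hH'def, Matrix.of_apply, hpowZ]
  have hidxl : ∀ j : Fin r, idx (Sum.inl j) = (j : ℕ) := fun j => by rw [hidxdef]; rfl
  have hidxr : ∀ n : Fin k, idx (Sum.inr n) = r + (n : ℕ) := fun n => by rw [hidxdef]; rfl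
  have hHQ1 : ∀ (a : Fin r ⊕ Fin k) (j : Fin r),
      (H' * Q) a (Sum.inl j) = H' a (Sum.inl j) := by
    intro a j
    rw [Matrix.mul_apply, hQdef, Fintype.sum_sum_type]
    simp only [Matrix.fromBlocks_apply₁₁, Matrix.fromBlocks_apply₂₁, Matrix.zero_apply,
      mul_zero, Finset.sum_const_zero, add_zero, Matrix.one_apply, mul_ite, mul_one]
    simp
  have hHQ2 : ∀ (a : Fin r ⊕ Fin k) (n : Fin k),
      (H' * Q) a (Sum.inr n) = ct ((Z ^ idx a) ((0 : Vp), η (n : ℕ))) := by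
    intro a n
    have expand : (H' * Q) a (Sum.inr n)
        = (∑ j : Fin r, Q12 j n * ct ((Z ^ idx a) ((Z ^ ((j : ℕ))) bt)))
          + ∑ n' : Fin k, Q22 n' n * ct ((Z ^ idx a) ((Z ^ (r + (n' : ℕ))) bt)) := by
      rw [Matrix.mul_apply, hQdef, Fintype.sum_sum_type]
      congr 1
      · apply Finset.sum_congr rfl
        intro j _
        rw [Matrix.fromBlocks_apply₁₂, hHb, hidxl, mul_comm]
      · apply Finset.sum_congr rfl
        intro n' _
        rw [Matrix.fromBlocks_apply₂₂, hHb, hidxr, mul_comm]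
    have hct := congrArg (fun q => ct ((Z ^ idx a) q)) (G2 n)
    simp only [map_add, map_sum, map_smul, smul_eq_mul] at hct
    rw [expand, hct]
  have hN : ∀ m n : Fin k, w (((Z ^ (m : ℕ)) ((0 : Vp), η (n : ℕ))).2) = N0 m n := by
    intro m n
    rw [L6 (m : ℕ) (η (n : ℕ)), hN0def, Matrix.of_apply]
    apply Finset.sum_congr rfl
    intro d hd
    have : w ((B ^ ((m : ℕ) - d)) (η (n : ℕ)))
        = ∑ q ∈ Finset.range ((n : ℕ) + 1), e q * w ((B ^ (((m : ℕ) - d) + ((n : ℕ) - q))) v) := by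
      simp only [hηdef]
      rw [L5 (n : ℕ), map_sum, map_sum]
      apply Finset.sum_congr rfl
      intro q hq
      rw [map_smul, map_smul, hBpow, smul_eq_mul]
    rw [this, Finset.mul_sum]
  have hK : P * (H' * Q) = Matrix.fromBlocks M0 0 0 N0 := by
    ext a b0
    rw [Matrix.mul_apply, hPdef]
    cases a with
    | inl i =>
      rw [Fintype.sum_sum_type]
      simp only [Matrix.fromBlocks_apply₁₁, Matrix.fromBlocks_apply₁₂, Matrix.zero_apply,
        zero_mul, Finset.sum_const_zero, add_zero, Matrix.one_apply, ite_mul, one_mul]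
      rw [Finset.sum_ite_eq Finset.univ i (fun i' => (H' * Q) (Sum.inl i') b0),
        if_pos (Finset.mem_univ i)]
      cases b0 with
      | inl j =>
        rw [hHQ1, hHb, hidxl, hidxl, Matrix.fromBlocks_apply₁₁, hM0def, Matrix.of_apply]
        rw [L1 (j : ℕ) j.2, L2 (i : ℕ) i.2, hpowapp]
      | inr n =>
        rw [hHQ2, hidxl, Matrix.fromBlocks_apply₁₂, Matrix.zero_apply]
        rw [L2 (i : ℕ) i.2]
        simp
    | inr m =>
      rw [Fintype.sum_sum_type]
      simp only [Matrix.fromBlocks_apply₂₁, Matrix.fromBlocks_apply₂₂]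
      cases b0 with
      | inl j0 =>
        have hcol : ∀ s : Fin r ⊕ Fin k, (H' * Q) s (Sum.inl j0)
            = ct ((Z ^ idx s) ((Z ^ ((j0 : ℕ))) bt)) := by
          intro s
          rw [hHQ1, hHb, hidxl]
        have hsum : (∑ j : Fin r, P21 m j * ct ((Z ^ ((j : ℕ))) ((Z ^ ((j0 : ℕ))) bt)))
            + ∑ m' : Fin k, P22 m m' * ct ((Z ^ (r + (m' : ℕ))) ((Z ^ ((j0 : ℕ))) bt))
            = w (((Z ^ (m : ℕ)) ((0 : Vp), ((Z ^ ((j0 : ℕ))) bt).2)).2) := G1 m _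
        rw [Matrix.fromBlocks_apply₂₁, Matrix.zero_apply]
        calc (∑ j : Fin r, P21 m j * (H' * Q) (Sum.inl j) (Sum.inl j0))
              + ∑ m' : Fin k, P22 m m' * (H' * Q) (Sum.inr m') (Sum.inl j0)
            = w (((Z ^ (m : ℕ)) ((0 : Vp), ((Z ^ ((j0 : ℕ))) bt).2)).2) := by
              rw [← hsum]
              congr 1
              · apply Finset.sum_congr rfl; intro j _; rw [hcol, hidxl]
              · apply Finset.sum_congr rfl; intro m' _; rw [hcol, hidxr]
          _ = 0 := by
              rw [L1 (j0 : ℕ) j0.2]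
              simp [Prod.mk_zero_zero]
      | inr n =>
        have hsum : (∑ j : Fin r, P21 m j * ct ((Z ^ ((j : ℕ))) ((0 : Vp), η (n : ℕ))))
            + ∑ m' : Fin k, P22 m m' * ct ((Z ^ (r + (m' : ℕ))) ((0 : Vp), η (n : ℕ)))
            = w (((Z ^ (m : ℕ)) ((0 : Vp), (((0 : Vp), η (n : ℕ)) : Vp × Vm).2)).2) := G1 m _
        rw [Matrix.fromBlocks_apply₂₂]
        calc (∑ j : Fin r, P21 m j * (H' * Q) (Sum.inl j) (Sum.inr n))
              + ∑ m' : Fin k, P22 m m' * (H' * Q) (Sum.inr m') (Sum.inr n)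
            = w (((Z ^ (m : ℕ)) ((0 : Vp), η (n : ℕ))).2) := by
              rw [← hsum]
              congr 1
              · apply Finset.sum_congr rfl; intro j _; rw [hHQ2, hidxl]
              · apply Finset.sum_congr rfl; intro m' _; rw [hHQ2, hidxr]
          _ = N0 m n := hN m n
  have detP : P.det = 1 := by
    have htri : P22.BlockTriangular OrderDual.toDual := by
      intro i j hij
      have hlt : i < j := hij
      rw [hP22def, Matrix.of_apply, if_neg (by exact fun h => absurd h (by
        intro h'; exact absurd (Fin.ext_iff.1 h') (by omega))), if_neg (by
        push_neg
        intro h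
        omega), sub_zero]
    rw [hPdef, Matrix.det_fromBlocks_zero₁₂, Matrix.det_one, one_mul,
      Matrix.det_of_lowerTriangular P22 htri]
    apply Finset.prod_eq_one
    intro m _
    rw [hP22def, Matrix.of_apply, if_pos rfl, if_neg (by omega), sub_zero]
  have detQ : Q.det = 1 := by
    have htri : Q22.BlockTriangular id := by
      intro i j hij
      have hlt : (j : ℕ) < (i : ℕ) := hij
      rw [hQ22def, Matrix.of_apply, if_neg (by
        intro h'; exact absurd (Fin.ext_iff.1 h') (by omega)), if_neg (by
        push_neg
        intro h
        omega), sub_zero]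
    rw [hQdef, Matrix.det_fromBlocks_zero₂₁, Matrix.det_one, one_mul,
      Matrix.det_of_upperTriangular htri]
    apply Finset.prod_eq_one
    intro n _
    rw [hQ22def, Matrix.of_apply, if_pos rfl, if_neg (by omega), sub_zero]
  have detN0 : N0.det = dLin F k B v w := by
    set HB : Matrix (Fin k) (Fin k) F :=
      Matrix.of (fun a b0 : Fin k => w ((B ^ ((a : ℕ) + (b0 : ℕ))) v)) with hHBdef
    set E1 : Matrix (Fin k) (Fin k) F :=
      Matrix.of (fun m a : Fin k => if (a : ℕ) ≤ (m : ℕ) then e' ((m : ℕ) - (a : ℕ)) else 0) with hE1def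
    set E2 : Matrix (Fin k) (Fin k) F :=
      Matrix.of (fun q n : Fin k => if (q : ℕ) ≤ (n : ℕ) then e ((n : ℕ) - (q : ℕ)) else 0) with hE2def
    have hinner : ∀ (a n : Fin k), (HB * E2) a n
        = ∑ q ∈ Finset.range ((n : ℕ) + 1), e q * w ((B ^ ((a : ℕ) + ((n : ℕ) - q))) v) := by
      intro a n
      rw [Matrix.mul_apply]
      have hterm : ∀ b0 : Fin k, HB a b0 * E2 b0 n
          = if (b0 : ℕ) ≤ (n : ℕ) then
              w ((B ^ ((a : ℕ) + (b0 : ℕ))) v) * e ((n : ℕ) - (b0 : ℕ)) else 0 := by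
        intro b0
        rw [hHBdef, hE2def, Matrix.of_apply, Matrix.of_apply, mul_ite, mul_zero]
      rw [Finset.sum_congr rfl (fun b0 _ => hterm b0),
        helper_cut k (n : ℕ) n.2 (fun b0 => w ((B ^ ((a : ℕ) + b0)) v) * e ((n : ℕ) - b0)),
        ← Finset.sum_range_reflect]
      apply Finset.sum_congr rfl
      intro q hq
      simp only [Finset.mem_range] at hq
      have h1 : (n : ℕ) + 1 - 1 - q = (n : ℕ) - q := by omega
      have h2 : (n : ℕ) - ((n : ℕ) - q) = q := by omega
      rw [h1, h2, mul_comm]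
    have hfac : N0 = E1 * (HB * E2) := by
      ext m n
      rw [hN0def, Matrix.of_apply, Matrix.mul_apply]
      calc (∑ d ∈ Finset.range ((m : ℕ) + 1), ∑ q ∈ Finset.range ((n : ℕ) + 1),
              e' d * (e q * w ((B ^ (((m : ℕ) - d) + ((n : ℕ) - q))) v)))
          = ∑ d ∈ Finset.range ((m : ℕ) + 1),
              e' d * ∑ q ∈ Finset.range ((n : ℕ) + 1),
                e q * w ((B ^ (((m : ℕ) - d) + ((n : ℕ) - q))) v) := by
            apply Finset.sum_congr rfl
            intro d _
            rw [Finset.mul_sum]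
        _ = ∑ a' ∈ Finset.range ((m : ℕ) + 1),
              e' ((m : ℕ) - a') * ∑ q ∈ Finset.range ((n : ℕ) + 1),
                e q * w ((B ^ (a' + ((n : ℕ) - q))) v) := by
            apply Finset.sum_nbij' (i := fun d => (m : ℕ) - d) (j := fun a' => (m : ℕ) - a')
            · intro d hd; simp only [Finset.mem_range] at *; omega
            · intro a' ha'; simp only [Finset.mem_range] at *; omega
            · intro d hd; simp only [Finset.mem_range] at *; omega
            · intro a' ha'; simp only [Finset.mem_range] at *; omega
            · intro d hd
              simp only [Finset.mem_range] at hd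
              have h1 : (m : ℕ) - ((m : ℕ) - d) = d := by omega
              rw [h1]
        _ = ∑ a : Fin k, E1 m a * (HB * E2) a n := by
            rw [← helper_cut k (m : ℕ) m.2 (fun a' =>
              e' ((m : ℕ) - a') * ∑ q ∈ Finset.range ((n : ℕ) + 1),
                e q * w ((B ^ (a' + ((n : ℕ) - q))) v))]
            apply Finset.sum_congr rfl
            intro a _
            rw [hinner a n, hE1def, Matrix.of_apply, ite_mul, zero_mul]
    have detE1 : E1.det = 1 := by
      have htri : E1.BlockTriangular OrderDual.toDual := by
        intro i j hij
        have hlt : i < j := hij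
        rw [hE1def, Matrix.of_apply, if_neg (by omega)]
      rw [Matrix.det_of_lowerTriangular E1 htri]
      apply Finset.prod_eq_one
      intro m _
      rw [hE1def, Matrix.of_apply, if_pos le_rfl, Nat.sub_self]
      simp [he'def]
    have detE2 : E2.det = 1 := by
      have htri : E2.BlockTriangular id := by
        intro i j hij
        have hlt : (j : ℕ) < (i : ℕ) := hij
        rw [hE2def, Matrix.of_apply, if_neg (by omega)]
      rw [Matrix.det_of_upperTriangular htri]
      apply Finset.prod_eq_one
      intro n _
      rw [hE2def, Matrix.of_apply, if_pos le_rfl, Nat.sub_self]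
      simp [hedef]
    rw [hfac, Matrix.det_mul, Matrix.det_mul, detE1, detE2, hHBdef]
    rw [one_mul, mul_one]
    rfl
  have detH' : dLin F (r + k) Z bt ct = H'.det := by
    have hcoe : ∀ a : Fin r ⊕ Fin k, ((finSumFinEquiv a : Fin (r + k)) : ℕ) = idx a := by
      intro a
      cases a with
      | inl i => rw [finSumFinEquiv_apply_left, hidxl]; exact Fin.coe_castAdd _ _
      | inr n => rw [finSumFinEquiv_apply_right, hidxr]; exact Fin.coe_natAdd _ _
    have heq : H' = (Matrix.of fun i j : Fin (r + k) =>
        ct ((Z ^ ((i : ℕ) + (j : ℕ))) bt)).submatrix finSumFinEquiv finSumFinEquiv := by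
      ext a b0
      rw [Matrix.submatrix_apply, Matrix.of_apply, hH'def, Matrix.of_apply, hcoe, hcoe]
    rw [heq, Matrix.det_submatrix_equiv_self]
    rfl
  calc dLin F (r + k) Z bt ct = H'.det := detH'
    _ = P.det * H'.det * Q.det := by rw [detP, detQ]; ring
    _ = (P * (H' * Q)).det := by rw [Matrix.det_mul, Matrix.det_mul]; ring
    _ = (Matrix.fromBlocks M0 0 0 N0).det := by rw [hK]
    _ = M0.det * N0.det := Matrix.det_fromBlocks_zero₂₁ _ _ _
    _ = dLin F r A b c * dLin F k B v w := by rw [detN0, hM0def]; rfl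
end

section
/- Let F be a field of characteristic zero, V⁺ and V⁻ finite-dimensional F-vector spaces with dim V⁺ = r ≥ 1, and V = V⁺ ⊕ V⁻. Let 𝔰(V⁺,V⁻) be the set of triples (Ã, b̃, c̃) ∈ End(V) × V × V* such that the subspace of V spanned by b̃, Ã(b̃), …, Ã^{r-1}(b̃) equals V⁺ and the subspace {x ∈ V : c̃(Ã^i(x)) = 0 for all 0 ≤ i ≤ r-1} equals V⁻. Define ι((A,b,c),(B,v,w)) = (Z, b, c̄) for (A,b,c) ∈ End(V⁺) × V⁺ × (V⁺)* with d_r(A,b,c) ≠ 0 and (B,v,w) ∈ End(V⁻) × V⁻ × (V⁻)*, where c̄ extends c by zero on V⁻, Z(x,y) = (A(x) + w(y)·b', c'(x)·v + B(y)), and b' ∈ V⁺, c' ∈ (V⁺)* are the unique elements with c(A^i(b')) = δ_{i,r-1} and c'(A^i(b)) = δ_{i,r-1} for 0 ≤ i ≤ r-1. Then: (1) ι is a bijection from {(A,b,c) : d_r(A,b,c) ≠ 0} × (End(V⁻) × V⁻ × (V⁻)*) onto 𝔰(V⁺,V⁻); (2) writing an element (Ã,b̃,c̃) of 𝔰(V⁺,V⁻)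 in block form Ã = (A⁺, L⁺; L⁻, A⁻) relative to V = V⁺ ⊕ V⁻, the inverse of ι sends it to ((A⁺, b̃, c̃|_{V⁺}), (A⁻, L⁻((A⁺)^{r-1}(b̃)), c̃ ∘ (A⁺)^{r-1} ∘ L⁺)); (3) ι is equivariant for GL(V⁺) × GL(V⁻), acting on triples by g·(A,b,c) = (g A g⁻¹, g(b), c ∘ g⁻¹) on each factor and, via block-diagonal inclusion into GL(V), on the target. -/
/-- The map `ι`, sending `((A,b,c), (B,v,w))` (together with the auxiliary vectors
`bp = b'` and form `cp = c'`) to the triple `(Z, (b,0), c̄)` on `V⁺ ⊕ V⁻`, where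
`Z (x, y) = (A x + w y • b', c' x • v + B y)` and `c̄` extends `c` by zero on `V⁻`. -/
def iotaMap (F : Type*) [Field F] (Vp Vm : Type*) [AddCommGroup Vp] [Module F Vp]
    [AddCommGroup Vm] [Module F Vm]
    (bp : Vp) (cp : Vp →ₗ[F] F)
    (A : Vp →ₗ[F] Vp) (b : Vp) (c : Vp →ₗ[F] F)
    (B : Vm →ₗ[F] Vm) (v : Vm) (w : Vm →ₗ[F] F) :
    ((Vp × Vm) →ₗ[F] (Vp × Vm)) × (Vp × Vm) × ((Vp × Vm) →ₗ[F] F) :=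
  (LinearMap.prod
      (A ∘ₗ LinearMap.fst F Vp Vm + (w ∘ₗ LinearMap.snd F Vp Vm).smulRight bp)
      ((cp ∘ₗ LinearMap.fst F Vp Vm).smulRight v + B ∘ₗ LinearMap.snd F Vp Vm),
    (b, 0), c ∘ₗ LinearMap.fst F Vp Vm)

/-- The locally closed set `𝔰(V⁺, V⁻)` of triples `(Ã, b̃, c̃)` such that the span of
`b̃, Ã b̃, …, Ã^{r-1} b̃` is `V⁺ = V⁺ × 0` and
`{x | c̃ (Ã^i x) = 0 for 0 ≤ i ≤ r-1}` is `V⁻ = 0 × V⁻`. -/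
def sSet (F : Type*) [Field F] (Vp Vm : Type*) [AddCommGroup Vp] [Module F Vp]
    [AddCommGroup Vm] [Module F Vm] (r : ℕ) :
    Set (((Vp × Vm) →ₗ[F] (Vp × Vm)) × (Vp × Vm) × ((Vp × Vm) →ₗ[F] F)) :=
  {t | Submodule.span F (Set.range fun i : Fin r => (t.1 ^ (i : ℕ)) t.2.1) =
        LinearMap.range (LinearMap.inl F Vp Vm) ∧
      {x : Vp × Vm | ∀ i < r, t.2.2 ((t.1 ^ i) x) = 0} =
        (LinearMap.range (LinearMap.inr F Vp Vm) : Set (Vp × Vm))}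

/-! The Hankel matrix `(c (A^{i+j} b))` is the product of the observability matrix of `(A, c)`
and the controllability matrix of `(A, b)`, so when `dim V⁺ = r` we have `d_r(A,b,c) ≠ 0` iff
the `A^i b` (`i < r`) form a basis and the forms `c ∘ A^i` separate points; `b'` and `c'` are
then the last vectors of the dual bases.

For `Z = ι(...)`, the correction terms `w(y) b'` and `c'(x) v` are invisible to `c̄ ∘ Z^i` and to
`Z^i (b, 0)` for `i < r`, so `ι` lands in `𝔰(V⁺, V⁻)`, and the block formula recovers the data.
Conversely, for `(Ã, b̃, c̃) ∈ 𝔰(V⁺, V⁻)` the span condition forces `L⁻` to kill `(A⁺)^i b̃` for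
`i < r - 1`, and the kernel condition forces `c̃ ∘ (A⁺)^i ∘ L⁺ = 0` for `i < r - 1`; by duality
`L⁻ = c'(·) v` and `L⁺ = w(·) b'`, i.e. the triple is `ι` of its block data. -/

open LinearMap Submodule

section Hankel

variable {F : Type*} [Field F] {V : Type*} [AddCommGroup V] [Module F V]
  {r : ℕ} {A : V →ₗ[F] V} {b : V} {c : V →ₗ[F] F}

variable (r) in
def IsControllable (A : V →ₗ[F] V) (b : V) : Prop :=
  span F (Set.range fun i : Fin r => (A ^ (i : ℕ)) b) = ⊤

variable (r) in
def IsObservable (A : V →ₗ[F] V) (c : V →ₗ[F] F) : Prop :=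
  ∀ x, (∀ i < r, c ((A ^ i) x) = 0) → x = 0

theorem hankel_mulVec (g : Fin r → F) :
    (Matrix.of fun i j : Fin r => c ((A ^ ((i : ℕ) + (j : ℕ))) b)).mulVec g =
      fun i : Fin r => c ((A ^ (i : ℕ)) (∑ j, g j • (A ^ (j : ℕ)) b)) := by
  ext i
  simp [Matrix.mulVec, dotProduct, pow_add, mul_comm]

theorem dLin_ne_zero_iff [FiniteDimensional F V] (hdim : Module.finrank F V = r) :
    dLin F r A b c ≠ 0 ↔ IsControllable r A b ∧ IsObservable r A c := by
  classical
  have hcard : Fintype.card (Fin r) = Module.finrank F V := by simp [hdim]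
  constructor
  · intro hd
    have hker : ∀ g : Fin r → F, (∀ i : Fin r, c ((A ^ (i : ℕ)) (∑ j, g j • (A ^ (j : ℕ)) b)) = 0) →
        g = 0 := fun g hg => by
      by_contra hg0
      exact hd <| Matrix.exists_mulVec_eq_zero_iff.mp
        ⟨g, hg0, by rw [hankel_mulVec]; exact funext hg⟩
    have hli : LinearIndependent F fun i : Fin r => (A ^ (i : ℕ)) b :=
      Fintype.linearIndependent_iff.mpr fun g hg => by simpa using congrFun (hker g (by simp [hg]))
    have hctrl : IsControllable r A b := hli.span_eq_top_of_card_eq_finrank' hcard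
    refine ⟨hctrl, fun x hx => ?_⟩
    obtain ⟨g, rfl⟩ := (mem_span_range_iff_exists_fun F).mp (hctrl ▸ mem_top : x ∈ span F _)
    simp [hker g fun i => hx i i.2]
  · rintro ⟨hctrl, hobs⟩ hd
    obtain ⟨g, hg0, hg⟩ := Matrix.exists_mulVec_eq_zero_iff.mpr hd
    rw [hankel_mulVec (A := A) (b := b) (c := c)] at hg
    have hli := linearIndependent_of_top_le_span_of_card_eq_finrank hctrl.ge hcard
    exact hg0 (funext <| Fintype.linearIndependent_iff.mp hli g <|
      hobs _ fun i hi => congrFun hg ⟨i, hi⟩)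

theorem IsObservable.eq_of_apply_pow_eq (h : IsObservable r A c) {x y : V}
    (hxy : ∀ i < r, c ((A ^ i) x) = c ((A ^ i) y)) : x = y :=
  sub_eq_zero.mp <| h _ fun i hi => by simp [hxy i hi]

theorem IsControllable.ext {M : Type*} [AddCommGroup M] [Module F M] (h : IsControllable r A b)
    {f g : V →ₗ[F] M} (hfg : ∀ i < r, f ((A ^ i) b) = g ((A ^ i) b)) : f = g :=
  ext_on_range h fun i => hfg i i.2

theorem IsObservable.eq_smul_of_apply_pow_eq_zero (h : IsObservable r A c) {b' : V}
    (hb' : ∀ i < r, c ((A ^ i) b') = if i = r - 1 then 1 else 0) {x : V}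
    (hx : ∀ i, i + 1 < r → c ((A ^ i) x) = 0) : x = c ((A ^ (r - 1)) x) • b' := by
  refine h.eq_of_apply_pow_eq fun i hi => ?_
  rw [map_smul, map_smul, hb' i hi, smul_eq_mul]
  split_ifs with hlast
  · rw [hlast, mul_one]
  · rw [mul_zero, hx i (by omega)]

theorem IsControllable.eq_smulRight_of_apply_pow_eq_zero {M : Type*} [AddCommGroup M] [Module F M]
    (h : IsControllable r A b) {c' : V →ₗ[F] F}
    (hc' : ∀ i < r, c' ((A ^ i) b) = if i = r - 1 then 1 else 0) {f : V →ₗ[F] M}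
    (hf : ∀ i, i + 1 < r → f ((A ^ i) b) = 0) : f = c'.smulRight (f ((A ^ (r - 1)) b)) := by
  refine h.ext fun i hi => ?_
  rw [smulRight_apply, hc' i hi]
  split_ifs with hlast
  · rw [hlast, one_smul]
  · rw [zero_smul, hf i (by omega)]

theorem conj_pow_apply (g : V ≃ₗ[F] V) (A : V →ₗ[F] V) (i : ℕ) (x : V) :
    ((g.toLinearMap ∘ₗ A ∘ₗ g.symm.toLinearMap) ^ i) x = g ((A ^ i) (g.symm x)) := by
  rw [← LinearEquiv.conjAlgEquiv_apply (R := F), ← map_pow]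
  rfl

theorem dLin_conj (g : V ≃ₗ[F] V) :
    dLin F r (g.toLinearMap ∘ₗ A ∘ₗ g.symm.toLinearMap) (g b) (c ∘ₗ g.symm.toLinearMap) =
      dLin F r A b c := by
  simp [dLin, conj_pow_apply]

theorem IsObservable.eq_of_dual_conj (g : V ≃ₗ[F] V)
    (h : IsObservable r (g.toLinearMap ∘ₗ A ∘ₗ g.symm.toLinearMap) (c ∘ₗ g.symm.toLinearMap))
    {b₁ b₂ : V}
    (hb₁ : ∀ i < r, (c ∘ₗ g.symm.toLinearMap) (((g.toLinearMap ∘ₗ A ∘ₗ g.symm.toLinearMap) ^ i) b₁)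
      = if i = r - 1 then 1 else 0)
    (hb₂ : ∀ i < r, c ((A ^ i) b₂) = if i = r - 1 then 1 else 0) : b₁ = g b₂ :=
  h.eq_of_apply_pow_eq fun i hi => by rw [hb₁ i hi]; simp [conj_pow_apply, hb₂ i hi]

theorem IsControllable.eq_of_dual_conj (g : V ≃ₗ[F] V)
    (h : IsControllable r (g.toLinearMap ∘ₗ A ∘ₗ g.symm.toLinearMap) (g b)) {c₁ c₂ : V →ₗ[F] F}
    (hc₁ : ∀ i < r, c₁ (((g.toLinearMap ∘ₗ A ∘ₗ g.symm.toLinearMap) ^ i) (g b))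
      = if i = r - 1 then 1 else 0)
    (hc₂ : ∀ i < r, c₂ ((A ^ i) b) = if i = r - 1 then 1 else 0) :
    c₁ = c₂ ∘ₗ g.symm.toLinearMap :=
  h.ext fun i hi => by rw [hc₁ i hi]; simp [conj_pow_apply, hc₂ i hi]

end Hankel

section Iota

variable {F : Type*} [Field F] {Vp Vm : Type*} [AddCommGroup Vp] [Module F Vp]
  [AddCommGroup Vm] [Module F Vm] {r : ℕ} {bp : Vp} {cp : Vp →ₗ[F] F}
  {A : Vp →ₗ[F] Vp} {b : Vp} {c : Vp →ₗ[F] F} {B : Vm →ₗ[F] Vm} {v : Vm} {w : Vm →ₗ[F] F}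

@[simp]
theorem iotaMap_fst_apply (x : Vp × Vm) :
    (iotaMap F Vp Vm bp cp A b c B v w).1 x = (A x.1 + w x.2 • bp, cp x.1 • v + B x.2) := rfl

@[simp]
theorem iotaMap_snd_fst : (iotaMap F Vp Vm bp cp A b c B v w).2.1 = (b, 0) := rfl

@[simp]
theorem iotaMap_snd_snd_apply (x : Vp × Vm) :
    (iotaMap F Vp Vm bp cp A b c B v w).2.2 x = c x.1 := rfl

theorem iotaMap_pow_apply_vec (hcp : ∀ i < r, cp ((A ^ i) b) = if i = r - 1 then 1 else 0) :
    ∀ i < r, ((iotaMap F Vp Vm bp cp A b c B v w).1 ^ i) (b, 0) = ((A ^ i) b, 0)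
  | 0, _ => rfl
  | i + 1, hi => by
    rw [pow_succ', Module.End.mul_apply, iotaMap_pow_apply_vec hcp i (by omega),
      iotaMap_fst_apply, hcp i (by omega), if_neg (by omega)]
    simp [pow_succ']

theorem iotaMap_form_pow_apply (hbp : ∀ i < r, c ((A ^ i) bp) = if i = r - 1 then 1 else 0) :
    ∀ i < r, ∀ x : Vp × Vm,
      (iotaMap F Vp Vm bp cp A b c B v w).2.2 (((iotaMap F Vp Vm bp cp A b c B v w).1 ^ i) x) =
        c ((A ^ i) x.1)
  | 0, _, _ => rfl
  | i + 1, hi, x => by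
    rw [pow_succ, Module.End.mul_apply, iotaMap_form_pow_apply hbp i (by omega), iotaMap_fst_apply]
    simp [hbp i (by omega), if_neg (show i ≠ r - 1 by omega), pow_succ]

theorem iotaMap_mem_sSet (hctrl : IsControllable r A b) (hobs : IsObservable r A c)
    (hbp : ∀ i < r, c ((A ^ i) bp) = if i = r - 1 then 1 else 0)
    (hcp : ∀ i < r, cp ((A ^ i) b) = if i = r - 1 then 1 else 0) :
    iotaMap F Vp Vm bp cp A b c B v w ∈ sSet F Vp Vm r := by
  refine ⟨?_, Set.ext fun x => ⟨fun hx => ?_, ?_⟩⟩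
  · have hvecs : (fun i : Fin r => ((iotaMap F Vp Vm bp cp A b c B v w).1 ^ (i : ℕ)) (b, 0)) =
        inl F Vp Vm ∘ fun i : Fin r => (A ^ (i : ℕ)) b :=
      funext fun i => iotaMap_pow_apply_vec hcp i i.2
    rw [iotaMap_snd_fst, hvecs, Set.range_comp, span_image, hctrl, Submodule.map_top]
  · have hx1 : x.1 = 0 := hobs _ fun i hi => by
      rw [← iotaMap_form_pow_apply hbp i hi x]
      exact hx i hi
    exact ⟨x.2, Prod.ext hx1.symm rfl⟩
  · rintro ⟨y, rfl⟩ i hi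
    rw [iotaMap_form_pow_apply hbp i hi]
    simp

theorem iotaMap_conj (gp : Vp ≃ₗ[F] Vp) (gm : Vm ≃ₗ[F] Vm) :
    iotaMap F Vp Vm (gp bp) (cp ∘ₗ gp.symm.toLinearMap)
        (gp.toLinearMap ∘ₗ A ∘ₗ gp.symm.toLinearMap) (gp b) (c ∘ₗ gp.symm.toLinearMap)
        (gm.toLinearMap ∘ₗ B ∘ₗ gm.symm.toLinearMap) (gm v) (w ∘ₗ gm.symm.toLinearMap) =
      ((gp.toLinearMap.prodMap gm.toLinearMap) ∘ₗ (iotaMap F Vp Vm bp cp A b c B v w).1 ∘ₗ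
          (gp.symm.toLinearMap.prodMap gm.symm.toLinearMap),
        (gp.toLinearMap.prodMap gm.toLinearMap) (iotaMap F Vp Vm bp cp A b c B v w).2.1,
        (iotaMap F Vp Vm bp cp A b c B v w).2.2 ∘ₗ
          (gp.symm.toLinearMap.prodMap gm.symm.toLinearMap)) := by
  refine Prod.ext (LinearMap.ext fun x => ?_) (Prod.ext ?_ (LinearMap.ext fun x => ?_)) <;> simp

end Iota

section Inverse

variable {F : Type*} [Field F] {Vp Vm : Type*} [AddCommGroup Vp] [Module F Vp]
  [AddCommGroup Vm] [Module F Vm] {r : ℕ}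

variable (r) in
def iotaInv (t : ((Vp × Vm) →ₗ[F] (Vp × Vm)) × (Vp × Vm) × ((Vp × Vm) →ₗ[F] F)) :
    ((Vp →ₗ[F] Vp) × Vp × (Vp →ₗ[F] F)) × ((Vm →ₗ[F] Vm) × Vm × (Vm →ₗ[F] F)) :=
  let Ap := fst F Vp Vm ∘ₗ t.1 ∘ₗ inl F Vp Vm
  let Lm := snd F Vp Vm ∘ₗ t.1 ∘ₗ inl F Vp Vm
  let Lp := fst F Vp Vm ∘ₗ t.1 ∘ₗ inr F Vp Vm
  let Am := snd F Vp Vm ∘ₗ t.1 ∘ₗ inr F Vp Vm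
  let cres := t.2.2 ∘ₗ inl F Vp Vm
  ((Ap, t.2.1.1, cres), (Am, Lm ((Ap ^ (r - 1)) t.2.1.1), cres ∘ₗ (Ap ^ (r - 1)) ∘ₗ Lp))

theorem iotaInv_iotaMap {bp : Vp} {cp : Vp →ₗ[F] F} {A : Vp →ₗ[F] Vp} {b : Vp}
    {c : Vp →ₗ[F] F} (B : Vm →ₗ[F] Vm) (v : Vm) (w : Vm →ₗ[F] F)
    (hbp : c ((A ^ (r - 1)) bp) = 1) (hcp : cp ((A ^ (r - 1)) b) = 1) :
    iotaInv r (iotaMap F Vp Vm bp cp A b c B v w) = ((A, b, c), (B, v, w)) := by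
  have hA : fst F Vp Vm ∘ₗ (iotaMap F Vp Vm bp cp A b c B v w).1 ∘ₗ inl F Vp Vm = A :=
    LinearMap.ext fun x => by simp
  refine Prod.ext (Prod.ext hA (Prod.ext rfl (LinearMap.ext fun x => ?_)))
    (Prod.ext (LinearMap.ext fun y => ?_) (Prod.ext ?_ (LinearMap.ext fun y => ?_))) <;>
    simp [iotaInv, hA, hbp, hcp]

variable {Z : (Vp × Vm) →ₗ[F] (Vp × Vm)} {β : Vp × Vm} {γ : (Vp × Vm) →ₗ[F] F}

theorem pow_apply_eq_inl_of_span_eq_range_inl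
    (hspan : span F (Set.range fun i : Fin r => (Z ^ (i : ℕ)) β) = range (inl F Vp Vm)) :
    ∀ i < r, (Z ^ i) β = inl F Vp Vm (((fst F Vp Vm ∘ₗ Z ∘ₗ inl F Vp Vm) ^ i) β.1) := by
  have hsnd : ∀ i < r, ((Z ^ i) β).2 = 0 := fun i hi => by
    have hmem : (Z ^ i) β ∈ range (inl F Vp Vm) := hspan ▸ subset_span ⟨⟨i, hi⟩, rfl⟩
    rwa [range_inl, mem_ker] at hmem
  intro i
  induction i with
  | zero => exact fun hi => Prod.ext rfl (hsnd 0 hi)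
  | succ i ih =>
    refine fun hi => Prod.ext ?_ (hsnd (i + 1) hi)
    rw [pow_succ', Module.End.mul_apply, ih (by omega), pow_succ', Module.End.mul_apply]
    rfl

theorem isControllable_of_span_eq_range_inl
    (hspan : span F (Set.range fun i : Fin r => (Z ^ (i : ℕ)) β) = range (inl F Vp Vm)) :
    IsControllable r (fst F Vp Vm ∘ₗ Z ∘ₗ inl F Vp Vm) β.1 := by
  refine map_injective_of_injective (inl_injective (R := F) (M₂ := Vm)) ?_
  rw [← span_image, ← Set.range_comp, Submodule.map_top, ← hspan]
  exact congrArg _ (congrArg _ (funext fun i =>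
    (pow_apply_eq_inl_of_span_eq_range_inl hspan i i.2).symm))

theorem lowerBlock_apply_pow_eq_zero_of_span
    (hspan : span F (Set.range fun i : Fin r => (Z ^ (i : ℕ)) β) = range (inl F Vp Vm)) :
    ∀ i, i + 1 < r →
      (snd F Vp Vm ∘ₗ Z ∘ₗ inl F Vp Vm) (((fst F Vp Vm ∘ₗ Z ∘ₗ inl F Vp Vm) ^ i) β.1) = 0 :=
  fun i hi => by
    have h := pow_apply_eq_inl_of_span_eq_range_inl hspan (i + 1) hi
    rw [pow_succ', Module.End.mul_apply, pow_apply_eq_inl_of_span_eq_range_inl hspan i (by omega)]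
      at h
    exact congrArg Prod.snd h

theorem form_pow_apply_inr_eq_zero_of_ker
    (hker : {x | ∀ i < r, γ ((Z ^ i) x) = 0} = (range (inr F Vp Vm) : Set (Vp × Vm)))
    {i : ℕ} (hi : i < r) (y : Vm) : γ ((Z ^ i) (0, y)) = 0 := by
  have hmem : ((0 : Vp), y) ∈ {x | ∀ i < r, γ ((Z ^ i) x) = 0} := hker ▸ ⟨y, rfl⟩
  exact hmem i hi

theorem form_pow_apply_of_ker
    (hker : {x | ∀ i < r, γ ((Z ^ i) x) = 0} = (range (inr F Vp Vm) : Set (Vp × Vm)))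
    {i : ℕ} (hi : i < r) (x : Vp × Vm) :
    γ ((Z ^ i) x) = (γ ∘ₗ inl F Vp Vm) (((fst F Vp Vm ∘ₗ Z ∘ₗ inl F Vp Vm) ^ i) x.1) := by
  have hinl : ∀ {j} (hj : j < r) (x : Vp × Vm), γ ((Z ^ j) x) = γ ((Z ^ j) (x.1, 0)) :=
    fun hj x => by
      conv_lhs => rw [← Prod.fst_add_snd x, map_add, map_add,
        form_pow_apply_inr_eq_zero_of_ker hker hj, add_zero]
  induction i generalizing x with
  | zero => exact hinl hi x
  | succ i ih =>
    rw [hinl hi, pow_succ, Module.End.mul_apply, ih (by omega), pow_succ, Module.End.mul_apply]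
    rfl

theorem isObservable_of_ker
    (hker : {x | ∀ i < r, γ ((Z ^ i) x) = 0} = (range (inr F Vp Vm) : Set (Vp × Vm))) :
    IsObservable r (fst F Vp Vm ∘ₗ Z ∘ₗ inl F Vp Vm) (γ ∘ₗ inl F Vp Vm) := fun x hx => by
  have hmem : ((x, 0) : Vp × Vm) ∈ {x | ∀ i < r, γ ((Z ^ i) x) = 0} := fun i hi =>
    (form_pow_apply_of_ker hker hi _).trans (hx i hi)
  rw [hker] at hmem
  obtain ⟨y, hy⟩ := hmem
  exact (congrArg Prod.fst hy).symm

theorem form_pow_apply_upperBlock_eq_zero_of_ker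
    (hker : {x | ∀ i < r, γ ((Z ^ i) x) = 0} = (range (inr F Vp Vm) : Set (Vp × Vm)))
    {i : ℕ} (hi : i + 1 < r) (y : Vm) :
    (γ ∘ₗ inl F Vp Vm) (((fst F Vp Vm ∘ₗ Z ∘ₗ inl F Vp Vm) ^ i)
      ((fst F Vp Vm ∘ₗ Z ∘ₗ inr F Vp Vm) y)) = 0 := by
  rw [← form_pow_apply_inr_eq_zero_of_ker hker hi y, pow_succ, Module.End.mul_apply,
    form_pow_apply_of_ker hker (by omega)]
  rfl

variable {t : ((Vp × Vm) →ₗ[F] (Vp × Vm)) × (Vp × Vm) × ((Vp × Vm) →ₗ[F] F)}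

theorem dLin_iotaInv_ne_zero [FiniteDimensional F Vp] (hdim : Module.finrank F Vp = r)
    (ht : t ∈ sSet F Vp Vm r) :
    dLin F r (iotaInv r t).1.1 (iotaInv r t).1.2.1 (iotaInv r t).1.2.2 ≠ 0 :=
  (dLin_ne_zero_iff hdim).mpr
    ⟨isControllable_of_span_eq_range_inl ht.1, isObservable_of_ker ht.2⟩

theorem iotaMap_iotaInv (hr : 1 ≤ r) (ht : t ∈ sSet F Vp Vm r) {bp : Vp} {cp : Vp →ₗ[F] F}
    (hbp : ∀ i < r, (iotaInv r t).1.2.2 (((iotaInv r t).1.1 ^ i) bp) =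
      if i = r - 1 then 1 else 0)
    (hcp : ∀ i < r, cp (((iotaInv r t).1.1 ^ i) (iotaInv r t).1.2.1) =
      if i = r - 1 then 1 else 0) :
    iotaMap F Vp Vm bp cp (iotaInv r t).1.1 (iotaInv r t).1.2.1 (iotaInv r t).1.2.2
      (iotaInv r t).2.1 (iotaInv r t).2.2.1 (iotaInv r t).2.2.2 = t := by
  obtain ⟨Z, β, γ⟩ := t
  obtain ⟨hspan, hker⟩ := ht
  have hβ : (β.1, 0) = β := (pow_apply_eq_inl_of_span_eq_range_inl hspan 0 hr).symm
  have hLp : ∀ y, (fst F Vp Vm ∘ₗ Z ∘ₗ inr F Vp Vm) y = _ := fun y =>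
    (isObservable_of_ker hker).eq_smul_of_apply_pow_eq_zero hbp
      fun i hi => form_pow_apply_upperBlock_eq_zero_of_ker hker hi y
  have hLm := (isControllable_of_span_eq_range_inl hspan).eq_smulRight_of_apply_pow_eq_zero hcp
    (lowerBlock_apply_pow_eq_zero_of_span hspan)
  refine Prod.ext (LinearMap.ext fun x => ?_) (Prod.ext hβ (LinearMap.ext fun x => ?_))
  · conv_rhs => rw [← Prod.fst_add_snd x, map_add]
    exact Prod.ext (congrArg (_ + ·) (hLp x.2).symm)
      (congrArg (· + _) (LinearMap.congr_fun hLm x.1).symm)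
  · exact (form_pow_apply_of_ker hker hr x).symm

end Inverse

theorem stmt_5_general (F : Type*) [Field F]
    (Vp Vm : Type*) [AddCommGroup Vp] [Module F Vp] [FiniteDimensional F Vp]
    [AddCommGroup Vm] [Module F Vm]
    (r : ℕ) (hr : 1 ≤ r) (hdim : Module.finrank F Vp = r)
    (b'f : (Vp →ₗ[F] Vp) → Vp → (Vp →ₗ[F] F) → Vp)
    (c'f : (Vp →ₗ[F] Vp) → Vp → (Vp →ₗ[F] F) → (Vp →ₗ[F] F))
    (hb' : ∀ (A : Vp →ₗ[F] Vp) (b : Vp) (c : Vp →ₗ[F] F), dLin F r A b c ≠ 0 →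
      ∀ i < r, c ((A ^ i) (b'f A b c)) = if i = r - 1 then 1 else 0)
    (hc' : ∀ (A : Vp →ₗ[F] Vp) (b : Vp) (c : Vp →ₗ[F] F), dLin F r A b c ≠ 0 →
      ∀ i < r, (c'f A b c) ((A ^ i) b) = if i = r - 1 then 1 else 0) :
    -- (1) `ι` is a bijection from the locus `d_r ≠ 0` onto `𝔰(V⁺,V⁻)`
    Set.BijOn
      (fun p : ((Vp →ₗ[F] Vp) × Vp × (Vp →ₗ[F] F)) × ((Vm →ₗ[F] Vm) × Vm × (Vm →ₗ[F] F)) =>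
        iotaMap F Vp Vm (b'f p.1.1 p.1.2.1 p.1.2.2) (c'f p.1.1 p.1.2.1 p.1.2.2)
          p.1.1 p.1.2.1 p.1.2.2 p.2.1 p.2.2.1 p.2.2.2)
      {p | dLin F r p.1.1 p.1.2.1 p.1.2.2 ≠ 0}
      (sSet F Vp Vm r) ∧
    -- (2) the formula for the inverse of `ι`
    (∀ t ∈ sSet F Vp Vm r,
      let Ap : Vp →ₗ[F] Vp := LinearMap.fst F Vp Vm ∘ₗ t.1 ∘ₗ LinearMap.inl F Vp Vm
      let Lm : Vp →ₗ[F] Vm := LinearMap.snd F Vp Vm ∘ₗ t.1 ∘ₗ LinearMap.inl F Vp Vm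
      let Lp : Vm →ₗ[F] Vp := LinearMap.fst F Vp Vm ∘ₗ t.1 ∘ₗ LinearMap.inr F Vp Vm
      let Am : Vm →ₗ[F] Vm := LinearMap.snd F Vp Vm ∘ₗ t.1 ∘ₗ LinearMap.inr F Vp Vm
      let cres : Vp →ₗ[F] F := t.2.2 ∘ₗ LinearMap.inl F Vp Vm
      dLin F r Ap t.2.1.1 cres ≠ 0 ∧
        iotaMap F Vp Vm (b'f Ap t.2.1.1 cres) (c'f Ap t.2.1.1 cres)
          Ap t.2.1.1 cres Am (Lm ((Ap ^ (r - 1)) t.2.1.1))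
          (cres ∘ₗ (Ap ^ (r - 1)) ∘ₗ Lp) = t) ∧
    -- (3) `GL(V⁺) × GL(V⁻)`-equivariance of `ι`
    (∀ (gp : Vp ≃ₗ[F] Vp) (gm : Vm ≃ₗ[F] Vm)
      (A : Vp →ₗ[F] Vp) (b : Vp) (c : Vp →ₗ[F] F)
      (B : Vm →ₗ[F] Vm) (v : Vm) (w : Vm →ₗ[F] F), dLin F r A b c ≠ 0 →
      iotaMap F Vp Vm
          (b'f (gp.toLinearMap ∘ₗ A ∘ₗ gp.symm.toLinearMap) (gp b) (c ∘ₗ gp.symm.toLinearMap))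
          (c'f (gp.toLinearMap ∘ₗ A ∘ₗ gp.symm.toLinearMap) (gp b) (c ∘ₗ gp.symm.toLinearMap))
          (gp.toLinearMap ∘ₗ A ∘ₗ gp.symm.toLinearMap) (gp b) (c ∘ₗ gp.symm.toLinearMap)
          (gm.toLinearMap ∘ₗ B ∘ₗ gm.symm.toLinearMap) (gm v) (w ∘ₗ gm.symm.toLinearMap) =
        ((gp.toLinearMap.prodMap gm.toLinearMap) ∘ₗ
            (iotaMap F Vp Vm (b'f A b c) (c'f A b c) A b c B v w).1 ∘ₗ
            (gp.symm.toLinearMap.prodMap gm.symm.toLinearMap),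
          (gp.toLinearMap.prodMap gm.toLinearMap)
            ((iotaMap F Vp Vm (b'f A b c) (c'f A b c) A b c B v w).2.1),
          (iotaMap F Vp Vm (b'f A b c) (c'f A b c) A b c B v w).2.2 ∘ₗ
            (gp.symm.toLinearMap.prodMap gm.symm.toLinearMap))) := by
  have hdual : ∀ (A : Vp →ₗ[F] Vp) (b : Vp) (c : Vp →ₗ[F] F), dLin F r A b c ≠ 0 →
      c ((A ^ (r - 1)) (b'f A b c)) = 1 ∧ (c'f A b c) ((A ^ (r - 1)) b) = 1 := fun A b c hd =>
    ⟨by simpa using hb' A b c hd (r - 1) (by omega), by simpa using hc' A b c hd (r - 1) (by omega)⟩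
  have hinv : ∀ t ∈ sSet F Vp Vm r, dLin F r (iotaInv r t).1.1 (iotaInv r t).1.2.1
      (iotaInv r t).1.2.2 ≠ 0 ∧ iotaMap F Vp Vm _ _ _ _ _ _ _ _ = t := fun t ht =>
    have hd := dLin_iotaInv_ne_zero hdim ht
    ⟨hd, iotaMap_iotaInv hr ht (hb' _ _ _ hd) (hc' _ _ _ hd)⟩
  refine ⟨Set.InvOn.bijOn (f' := iotaInv r) ⟨fun p hp => ?_, fun t ht => (hinv t ht).2⟩
      (fun p hp => ?_) (fun t ht => (hinv t ht).1), hinv, ?_⟩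
  · exact iotaInv_iotaMap _ _ _ (hdual _ _ _ hp).1 (hdual _ _ _ hp).2
  · obtain ⟨hctrl, hobs⟩ := (dLin_ne_zero_iff hdim).mp hp
    exact iotaMap_mem_sSet hctrl hobs (hb' _ _ _ hp) (hc' _ _ _ hp)
  · intro gp gm A b c B v w hd
    have hd' : dLin F r (gp.toLinearMap ∘ₗ A ∘ₗ gp.symm.toLinearMap) (gp b)
        (c ∘ₗ gp.symm.toLinearMap) ≠ 0 := by rwa [dLin_conj]
    obtain ⟨hctrl, hobs⟩ := (dLin_ne_zero_iff hdim).mp hd'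
    rw [hobs.eq_of_dual_conj gp (hb' _ _ _ hd') (hb' _ _ _ hd),
      hctrl.eq_of_dual_conj gp (hc' _ _ _ hd') (hc' _ _ _ hd)]
    exact iotaMap_conj gp gm

/-- `ι` is a `GL(V⁺) × GL(V⁻)`-equivariant bijection from
`{(A,b,c) : d_r(A,b,c) ≠ 0} × (End(V⁻) × V⁻ × (V⁻)*)` onto `𝔰(V⁺,V⁻)`, whose inverse is
given on block matrices by
`(Ã,b̃,c̃) ↦ ((A⁺, b̃, c̃|_{V⁺}), (A⁻, L⁻((A⁺)^{r-1} b̃), c̃ ∘ (A⁺)^{r-1} ∘ L⁺))`. -/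
theorem stmt_5 (F : Type*) [Field F] [CharZero F]
    (Vp Vm : Type*) [AddCommGroup Vp] [Module F Vp] [FiniteDimensional F Vp]
    [AddCommGroup Vm] [Module F Vm] [FiniteDimensional F Vm]
    (r : ℕ) (hr : 1 ≤ r) (hdim : Module.finrank F Vp = r)
    (b'f : (Vp →ₗ[F] Vp) → Vp → (Vp →ₗ[F] F) → Vp)
    (c'f : (Vp →ₗ[F] Vp) → Vp → (Vp →ₗ[F] F) → (Vp →ₗ[F] F))
    (hb' : ∀ (A : Vp →ₗ[F] Vp) (b : Vp) (c : Vp →ₗ[F] F), dLin F r A b c ≠ 0 →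
      ∀ i < r, c ((A ^ i) (b'f A b c)) = if i = r - 1 then 1 else 0)
    (hc' : ∀ (A : Vp →ₗ[F] Vp) (b : Vp) (c : Vp →ₗ[F] F), dLin F r A b c ≠ 0 →
      ∀ i < r, (c'f A b c) ((A ^ i) b) = if i = r - 1 then 1 else 0) :
    -- (1) `ι` is a bijection from the locus `d_r ≠ 0` onto `𝔰(V⁺,V⁻)`
    Set.BijOn
      (fun p : ((Vp →ₗ[F] Vp) × Vp × (Vp →ₗ[F] F)) × ((Vm →ₗ[F] Vm) × Vm × (Vm →ₗ[F] F)) =>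
        iotaMap F Vp Vm (b'f p.1.1 p.1.2.1 p.1.2.2) (c'f p.1.1 p.1.2.1 p.1.2.2)
          p.1.1 p.1.2.1 p.1.2.2 p.2.1 p.2.2.1 p.2.2.2)
      {p | dLin F r p.1.1 p.1.2.1 p.1.2.2 ≠ 0}
      (sSet F Vp Vm r) ∧
    -- (2) the formula for the inverse of `ι`
    (∀ t ∈ sSet F Vp Vm r,
      let Ap : Vp →ₗ[F] Vp := LinearMap.fst F Vp Vm ∘ₗ t.1 ∘ₗ LinearMap.inl F Vp Vm
      let Lm : Vp →ₗ[F] Vm := LinearMap.snd F Vp Vm ∘ₗ t.1 ∘ₗ LinearMap.inl F Vp Vm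
      let Lp : Vm →ₗ[F] Vp := LinearMap.fst F Vp Vm ∘ₗ t.1 ∘ₗ LinearMap.inr F Vp Vm
      let Am : Vm →ₗ[F] Vm := LinearMap.snd F Vp Vm ∘ₗ t.1 ∘ₗ LinearMap.inr F Vp Vm
      let cres : Vp →ₗ[F] F := t.2.2 ∘ₗ LinearMap.inl F Vp Vm
      dLin F r Ap t.2.1.1 cres ≠ 0 ∧
        iotaMap F Vp Vm (b'f Ap t.2.1.1 cres) (c'f Ap t.2.1.1 cres)
          Ap t.2.1.1 cres Am (Lm ((Ap ^ (r - 1)) t.2.1.1))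
          (cres ∘ₗ (Ap ^ (r - 1)) ∘ₗ Lp) = t) ∧
    -- (3) `GL(V⁺) × GL(V⁻)`-equivariance of `ι`
    (∀ (gp : Vp ≃ₗ[F] Vp) (gm : Vm ≃ₗ[F] Vm)
      (A : Vp →ₗ[F] Vp) (b : Vp) (c : Vp →ₗ[F] F)
      (B : Vm →ₗ[F] Vm) (v : Vm) (w : Vm →ₗ[F] F), dLin F r A b c ≠ 0 →
      iotaMap F Vp Vm
          (b'f (gp.toLinearMap ∘ₗ A ∘ₗ gp.symm.toLinearMap) (gp b) (c ∘ₗ gp.symm.toLinearMap))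
          (c'f (gp.toLinearMap ∘ₗ A ∘ₗ gp.symm.toLinearMap) (gp b) (c ∘ₗ gp.symm.toLinearMap))
          (gp.toLinearMap ∘ₗ A ∘ₗ gp.symm.toLinearMap) (gp b) (c ∘ₗ gp.symm.toLinearMap)
          (gm.toLinearMap ∘ₗ B ∘ₗ gm.symm.toLinearMap) (gm v) (w ∘ₗ gm.symm.toLinearMap) =
        ((gp.toLinearMap.prodMap gm.toLinearMap) ∘ₗ
            (iotaMap F Vp Vm (b'f A b c) (c'f A b c) A b c B v w).1 ∘ₗ
            (gp.symm.toLinearMap.prodMap gm.symm.toLinearMap),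
          (gp.toLinearMap.prodMap gm.toLinearMap)
            ((iotaMap F Vp Vm (b'f A b c) (c'f A b c) A b c B v w).2.1),
          (iotaMap F Vp Vm (b'f A b c) (c'f A b c) A b c B v w).2.2 ∘ₗ
            (gp.symm.toLinearMap.prodMap gm.symm.toLinearMap))) :=
  stmt_5_general F Vp Vm r hr hdim b'f c'f hb' hc'
end

section
/- Let F be a field of characteristic zero, V a finite-dimensional F-vector space, A an endomorphism of V, b ∈ V, c ∈ V* and r ≥ 1 an integer with d_r(A,b,c) ≠ 0. Then: (1) the vectors b, A(b), …, A^{r-1}(b) are linearly independent; (2) the linear forms c, c∘A, …, c∘A^{r-1} are linearly independent; (3) V is the direct sum of V⁺ = span(b, A(b), …, A^{r-1}(b)) and V⁻ = {x ∈ V : c(A^i(x)) = 0 for all 0 ≤ i ≤ r-1}. -/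
/-- If `d_r(A,b,c) = det ((c (A^{i+j} b))_{0 ≤ i,j ≤ r-1}) ≠ 0`, then
(1) `b, A b, …, A^{r-1} b` are linearly independent, (2) `c, c∘A, …, c∘A^{r-1}` are
linearly independent, and (3) `V` is the direct sum of
`V⁺ = span (b, A b, …, A^{r-1} b)` and `V⁻ = {x | c (A^i x) = 0, 0 ≤ i ≤ r-1}`. -/
theorem stmt_6 (F : Type*) [Field F] [CharZero F]
    (V : Type*) [AddCommGroup V] [Module F V] [FiniteDimensional F V]
    (A : V →ₗ[F] V) (b : V) (c : V →ₗ[F] F)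
    (r : ℕ) (hr : 1 ≤ r)
    (hd : (Matrix.of fun i j : Fin r => c ((A ^ ((i : ℕ) + (j : ℕ))) b)).det ≠ 0) :
    LinearIndependent F (fun i : Fin r => (A ^ (i : ℕ)) b) ∧
      LinearIndependent F (fun i : Fin r => c ∘ₗ (A ^ (i : ℕ))) ∧
      IsCompl (Submodule.span F (Set.range fun i : Fin r => (A ^ (i : ℕ)) b))
        (⨅ i : Fin r, LinearMap.ker (c ∘ₗ (A ^ (i : ℕ)))) := by
  set M : Matrix (Fin r) (Fin r) F :=
    Matrix.of fun i j : Fin r => c ((A ^ ((i : ℕ) + (j : ℕ))) b) with hM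
  set u : Fin r → V := fun i : Fin r => (A ^ (i : ℕ)) b with hu
  set φ : V →ₗ[F] (Fin r → F) := LinearMap.pi (fun i : Fin r => c ∘ₗ (A ^ (i : ℕ))) with hφ
  have hφx : ∀ (x : V) (i : Fin r), φ x i = c ((A ^ (i : ℕ)) x) := fun x i => rfl
  have hMentry : ∀ i j : Fin r, M i j = c ((A ^ (i : ℕ)) (u j)) := by
    intro i j
    simp only [hM, Matrix.of_apply, hu, ← LinearMap.comp_apply, ← Module.End.mul_eq_comp,
      ← pow_add]
  -- φ of a combination of the u's is M.mulVec
  have hcomb : ∀ a : Fin r → F, φ (∑ j, a j • u j) = M.mulVec a := by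
    intro a
    funext i
    rw [map_sum]
    simp only [Finset.sum_apply, map_smul, Pi.smul_apply, hφx, Matrix.mulVec, dotProduct,
      hMentry, smul_eq_mul, mul_comm]
  have h1 : LinearIndependent F u := by
    rw [Fintype.linearIndependent_iff]
    intro a ha
    have : M.mulVec a = 0 := by rw [← hcomb, ha, map_zero]
    exact funext_iff.mp (Matrix.eq_zero_of_mulVec_eq_zero hd this)
  have h2 : LinearIndependent F (fun i : Fin r => c ∘ₗ (A ^ (i : ℕ))) := by
    rw [Fintype.linearIndependent_iff]
    intro a ha
    have hMT : M.transpose.det ≠ 0 := by rwa [Matrix.det_transpose]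
    have : M.transpose.mulVec a = 0 := by
      funext j
      have h0 : (∑ i : Fin r, a i • c ∘ₗ (A ^ (i : ℕ))) (u j) = 0 := by
        rw [ha]; rfl
      rw [Pi.zero_apply, ← h0]
      simp only [Matrix.mulVec, dotProduct, Matrix.transpose_apply, hMentry,
        LinearMap.coe_sum, Finset.sum_apply, LinearMap.smul_apply, LinearMap.comp_apply,
        smul_eq_mul, mul_comm]
    exact funext_iff.mp (Matrix.eq_zero_of_mulVec_eq_zero hMT this)
  refine ⟨h1, h2, ?_⟩
  have hker : (⨅ i : Fin r, LinearMap.ker (c ∘ₗ (A ^ (i : ℕ)))) = LinearMap.ker φ :=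
    (LinearMap.ker_pi _).symm
  rw [hker]
  constructor
  · -- Disjoint
    rw [Submodule.disjoint_def]
    intro x hx hx0
    obtain ⟨a, rfl⟩ := (Submodule.mem_span_range_iff_exists_fun F).mp hx
    rw [LinearMap.mem_ker, hcomb] at hx0
    have := Matrix.eq_zero_of_mulVec_eq_zero hd hx0
    simp [this]
  · -- Codisjoint
    rw [codisjoint_iff_le_sup]
    intro x _
    have hdet : IsUnit M.det := isUnit_iff_ne_zero.mpr hd
    set a : Fin r → F := M⁻¹.mulVec (φ x) with ha
    set p : V := ∑ j, a j • u j with hp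
    have hφp : φ p = φ x := by
      rw [hp, hcomb, ha, Matrix.mulVec_mulVec, Matrix.mul_nonsing_inv _ hdet, Matrix.one_mulVec]
    refine Submodule.mem_sup.mpr ⟨p, ?_, x - p, ?_, by abel⟩
    · exact Submodule.sum_mem _ fun j _ =>
        Submodule.smul_mem _ _ (Submodule.subset_span ⟨j, rfl⟩)
    · rw [LinearMap.mem_ker, map_sub, hφp, sub_self]
end

section
/- Let F be a field of characteristic zero, V⁺ and V⁻ F-vector spaces, b' ∈ V⁺, c' ∈ (V⁺)*, v ∈ V⁻, w ∈ (V⁻)*, and N a nilpotent endomorphism of V⁻ such that w(N^i(v)) = 0 for every integer i ≥ 0. Then the endomorphism Z of V⁺ ⊕ V⁻ defined by Z(x,y) = (w(y)·b', c'(x)·v + N(y)) is nilpotent. -/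
/-- If `N` is a nilpotent endomorphism of `V⁻` with `w (N^i v) = 0` for all
`i ≥ 0`, then the endomorphism `Z` of `V⁺ ⊕ V⁻` given in block form by
`Z (x, y) = (w y • b', c' x • v + N y)` is nilpotent. -/
theorem stmt_8 (F : Type*) [Field F] [CharZero F]
    (Vp Vm : Type*) [AddCommGroup Vp] [Module F Vp] [AddCommGroup Vm] [Module F Vm]
    (b' : Vp) (c' : Vp →ₗ[F] F) (v : Vm) (w : Vm →ₗ[F] F)
    (N : Vm →ₗ[F] Vm) (hN : IsNilpotent N)
    (h : ∀ i : ℕ, w ((N ^ i) v) = 0) :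
    IsNilpotent
      (LinearMap.prod
        ((w ∘ₗ LinearMap.snd F Vp Vm).smulRight b')
        ((c' ∘ₗ LinearMap.fst F Vp Vm).smulRight v + N ∘ₗ LinearMap.snd F Vp Vm)) := by
  set Z : (Vp × Vm) →ₗ[F] (Vp × Vm) :=
    LinearMap.prod
      ((w ∘ₗ LinearMap.snd F Vp Vm).smulRight b')
      ((c' ∘ₗ LinearMap.fst F Vp Vm).smulRight v + N ∘ₗ LinearMap.snd F Vp Vm) with hZdef
  have hZ : ∀ p : Vp × Vm, Z p = (w p.2 • b', c' p.1 • v + N p.2) := by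
    intro p
    simp [hZdef, LinearMap.prod_apply, LinearMap.smulRight_apply]
  have key : ∀ n : ℕ, ∀ x : Vp, ∀ y : Vm,
      (Z ^ (n + 1)) (x, y) =
        (w ((N ^ n) y) • b',
         c' x • (N ^ n) v +
           (∑ i ∈ Finset.range n, (c' b' * w ((N ^ i) y)) • (N ^ (n - 1 - i)) v) +
           (N ^ (n + 1)) y) := by
    intro n
    induction n with
    | zero =>
      intro x y
      simp [hZ]
    | succ n ih =>
      intro x y
      have : (Z ^ (n + 2)) (x, y) = Z ((Z ^ (n + 1)) (x, y)) := by
        rw [pow_succ' Z (n + 1)]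
        rfl
      rw [this, ih, hZ]
      simp only [Prod.mk.injEq]
      refine ⟨?_, ?_⟩
      · -- first component
        simp only [map_add, map_smul, smul_eq_mul]
        rw [show w ((N ^ n) v) = 0 from h n]
        rw [map_sum]
        have : ∀ i ∈ Finset.range n,
            w ((c' b' * w ((N ^ i) y)) • (N ^ (n - 1 - i)) v) = 0 := by
          intro i _
          rw [map_smul, h (n - 1 - i), smul_zero]
        rw [Finset.sum_eq_zero this]
        ring_nf
      · -- second component
        simp only [map_add, map_smul, smul_eq_mul, Finset.sum_range_succ]
        have hNsum : ∀ i ∈ Finset.range n,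
            N ((c' b' * w ((N ^ i) y)) • (N ^ (n - 1 - i)) v)
              = (c' b' * w ((N ^ i) y)) • (N ^ (n - i)) v := by
          intro i hi
          rw [Finset.mem_range] at hi
          rw [map_smul]
          congr 1
          rw [show n - i = (n - 1 - i) + 1 by omega]
          rw [pow_succ']
          rfl
        rw [map_sum, Finset.sum_congr rfl hNsum]
        have h1 : ∑ i ∈ Finset.range n, (c' b' * w ((N ^ i) y)) • (N ^ (n + 1 - 1 - i)) v
            = ∑ i ∈ Finset.range n, (c' b' * w ((N ^ i) y)) • (N ^ (n - i)) v := by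
          refine Finset.sum_congr rfl fun i hi => ?_
          rw [Finset.mem_range] at hi
          congr 3
        rw [h1]
        have h2 : (N ^ (n + 1 - 1 - n)) v = v := by
          norm_num
        rw [h2]
        have h3 : (N ^ (n + 1 + 1)) y = N ((N ^ (n + 1)) y) := by
          rw [pow_succ']; rfl
        have h4 : (N ^ (n + 1)) v = N ((N ^ n) v) := by
          rw [pow_succ']; rfl
        rw [h3, h4]
        module
  obtain ⟨m, hm⟩ := hN
  have hz : ∀ k : ℕ, m ≤ k → (N ^ k : Vm →ₗ[F] Vm) = 0 := by
    intro k hk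
    rw [show k = m + (k - m) by omega, pow_add, hm, zero_mul]
  refine ⟨2 * m + 1, ?_⟩
  apply LinearMap.ext
  intro p
  rw [show p = (p.1, p.2) from rfl, key (2 * m) p.1 p.2]
  have hA : (N ^ (2 * m) : Vm →ₗ[F] Vm) = 0 := hz _ (by omega)
  have hB : (N ^ (2 * m + 1) : Vm →ₗ[F] Vm) = 0 := hz _ (by omega)
  rw [hA, hB]
  have hsum : ∀ i ∈ Finset.range (2 * m),
      (c' b' * w ((N ^ i) p.2)) • (N ^ (2 * m - 1 - i)) v = 0 := by
    intro i hi
    rw [Finset.mem_range] at hi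
    rcases le_or_gt m i with hmi | him
    · rw [hz i hmi]
      simp
    · rw [hz (2 * m - 1 - i) (by omega)]
      simp
  rw [Finset.sum_eq_zero hsum]
  simp [Prod.ext_iff]
end

section
/- Let F be a field of characteristic zero, V an n-dimensional F-vector space, W = V ⊕ F·e₀, and e₀* ∈ W* the linear form with e₀*(e₀) = 1 and e₀*(V) = 0. Identify GL(V) with the subgroup of GL(W) consisting of elements fixing e₀ and stabilizing V. Let Y, Y' ∈ End(W) and assume Y is regular semisimple, i.e. the determinant of the (n+1)×(n+1) matrix with (i,j) entry e₀*(Y^{i+j}(e₀)), 0 ≤ i,j ≤ n, is nonzero. Then the following are equivalent: (a) there exists g ∈ GL(V) with Y' = g Y g⁻¹; (b) Y and Y' have the same characteristic polynomial and e₀*(Y^i(e₀)) = e₀*(Y'^i(e₀)) for all 0 ≤ i ≤ n. Moreover, when these hold, the element g ∈ GL(V) with Y' = g Y g⁻¹ is unique. -/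
/-!
The Hankel matrix `(e₀*(Y^{i+j} e₀))_{i,j ≤ n}` is the matrix of the pairing between the vectors
`Y^j e₀` and the forms `e₀* ∘ Y^i`, so its nondegeneracy makes the Krylov vectors `Y^i e₀`,
`i ≤ n`, a basis of `W`. By Cayley–Hamilton the characteristic polynomial and the moments
`e₀*(Y^i e₀)`, `i ≤ n`, determine all moments, so `Y'` has the same Hankel matrix and its Krylov
vectors are a basis too. The linear map sending one Krylov basis to the other intertwines `Y`
and `Y'`, fixes `e₀` and preserves `e₀*`, hence is `g ⊕ id` for some `g ∈ GL(V)`. Conversely any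
such conjugation sends `Y^i e₀` to `Y'^i e₀`, which pins it down on a basis.
-/

open Polynomial Module

section Recurrence

variable {R M M' N : Type*} [CommRing R] [AddCommGroup M] [Module R M]
  [AddCommGroup M'] [Module R M'] [AddCommGroup N] [Module R N]

theorem Polynomial.Monic.pow_natDegree_add_eq {p : R[X]} (hp : p.Monic) {Z : Module.End R M}
    (hZ : aeval Z p = 0) (m : ℕ) :
    Z ^ (p.natDegree + m) = -∑ i ∈ Finset.range p.natDegree, p.coeff i • Z ^ (i + m) := by
  have h := congrArg (· * Z ^ m) hZ
  simp only [aeval_eq_sum_range, Finset.sum_range_succ, hp.coeff_natDegree, one_smul, add_mul,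
    Finset.sum_mul, smul_mul_assoc, ← pow_add, zero_mul] at h
  exact eq_neg_of_add_eq_zero_right h

theorem Polynomial.Monic.apply_pow_apply_eq {p : R[X]} (hp : p.Monic) {Z : Module.End R M}
    {Z' : Module.End R M'} (hZ : aeval Z p = 0) (hZ' : aeval Z' p = 0)
    (f : M →ₗ[R] N) (f' : M' →ₗ[R] N) (v : M) (v' : M')
    (h : ∀ k < p.natDegree, f ((Z ^ k) v) = f' ((Z' ^ k) v')) (k : ℕ) :
    f ((Z ^ k) v) = f' ((Z' ^ k) v') := by
  induction k using Nat.strong_induction_on with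
  | _ k ih =>
    obtain hk | hk := lt_or_ge k p.natDegree
    · exact h k hk
    obtain ⟨m, rfl⟩ := Nat.exists_eq_add_of_le hk
    simp only [hp.pow_natDegree_add_eq hZ, hp.pow_natDegree_add_eq hZ', LinearMap.neg_apply,
      LinearMap.sum_apply, LinearMap.smul_apply, map_neg, map_sum, map_smul]
    exact congrArg Neg.neg <| Finset.sum_congr rfl fun i hi =>
      by rw [ih (i + m) (by simp at hi; omega)]

theorem LinearMap.apply_pow_apply_eq_of_charpoly_eq [Nontrivial R] [Module.Free R M]
    [Module.Finite R M] {Z Z' : Module.End R M} (hcp : Z.charpoly = Z'.charpoly)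
    (f f' : M →ₗ[R] N) (v v' : M) (h : ∀ k < finrank R M, f ((Z ^ k) v) = f' ((Z' ^ k) v'))
    (k : ℕ) : f ((Z ^ k) v) = f' ((Z' ^ k) v') :=
  Z.charpoly_monic.apply_pow_apply_eq Z.aeval_self_charpoly (hcp ▸ Z'.aeval_self_charpoly)
    f f' v v' (by rwa [Z.charpoly_natDegree]) k

end Recurrence

theorem LinearEquiv.map_pow_apply_of_conj_eq {R M M' : Type*} [CommSemiring R] [AddCommMonoid M]
    [Module R M] [AddCommMonoid M'] [Module R M']
    {G : M ≃ₗ[R] M'} {Z : Module.End R M} {Z' : Module.End R M'} (h : G.conj Z = Z')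
    (k : ℕ) (x : M) : G ((Z ^ k) x) = (Z' ^ k) (G x) := by
  have hsemi : Function.Semiconj G Z Z' := fun y => by simp [← h]
  simpa only [Module.End.pow_apply] using hsemi.iterate_right k x

section Hankel

variable {K M : Type*} [Field K] [AddCommGroup M] [Module K M]

def hankelMatrix (φ : M →ₗ[K] K) (Z : Module.End K M) (v : M) (d : ℕ) :
    Matrix (Fin d) (Fin d) K :=
  Matrix.of fun i j => φ ((Z ^ ((i : ℕ) + (j : ℕ))) v)

theorem linearIndependent_pow_apply_of_det_hankelMatrix_ne_zero {φ : M →ₗ[K] K}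
    {Z : Module.End K M} {v : M} {d : ℕ} (h : (hankelMatrix φ Z v d).det ≠ 0) :
    LinearIndependent K fun i : Fin d => (Z ^ (i : ℕ)) v := by
  rw [Fintype.linearIndependent_iff]
  intro c hc
  refine congrFun (Matrix.eq_zero_of_mulVec_eq_zero h (funext fun i => ?_))
  have hrow := congrArg (fun w => φ ((Z ^ (i : ℕ)) w)) hc
  simp only [map_sum, map_smul, map_zero, ← Module.End.mul_apply, ← pow_add, smul_eq_mul] at hrow
  simpa [Matrix.mulVec, dotProduct, hankelMatrix, mul_comm] using hrow

theorem hankelMatrix_eq_of_charpoly_eq [FiniteDimensional K M] {φ : M →ₗ[K] K}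
    {Z Z' : Module.End K M} (hcp : Z.charpoly = Z'.charpoly) {v v' : M}
    (h : ∀ k < finrank K M, φ ((Z ^ k) v) = φ ((Z' ^ k) v')) (d : ℕ) :
    hankelMatrix φ Z v d = hankelMatrix φ Z' v' d :=
  Matrix.ext fun _ _ => LinearMap.apply_pow_apply_eq_of_charpoly_eq hcp φ φ v v' h _

end Hankel

section Krylov

variable {K M : Type*} [Field K] [AddCommGroup M] [Module K M] [FiniteDimensional K M] {d : ℕ}

noncomputable def krylovBasis (Z : Module.End K M) (v : M)
    (hZ : LinearIndependent K fun i : Fin d => (Z ^ (i : ℕ)) v) (hd : finrank K M = d) :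
    Basis (Fin d) K M :=
  basisOfLinearIndependentOfCardEqFinrank' _ hZ (by simp [hd])

@[simp]
theorem krylovBasis_apply (Z : Module.End K M) (v : M)
    (hZ : LinearIndependent K fun i : Fin d => (Z ^ (i : ℕ)) v) (hd : finrank K M = d)
    (i : Fin d) : krylovBasis Z v hZ hd i = (Z ^ (i : ℕ)) v := by
  simp [krylovBasis, basisOfLinearIndependentOfCardEqFinrank']

theorem exists_conj_eq_of_charpoly_eq {Z Z' : Module.End K M} {v v' : M}
    (hZ : LinearIndependent K fun i : Fin d => (Z ^ (i : ℕ)) v)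
    (hZ' : LinearIndependent K fun i : Fin d => (Z' ^ (i : ℕ)) v') (hd : finrank K M = d)
    (hcp : Z.charpoly = Z'.charpoly) :
    ∃ G : M ≃ₗ[K] M, G.conj Z = Z' ∧ ∀ k, G ((Z ^ k) v) = (Z' ^ k) v' := by
  set b := krylovBasis Z v hZ hd
  set b' := krylovBasis Z' v' hZ' hd
  set G := b.equiv b' (Equiv.refl _)
  have hG : ∀ k, G ((Z ^ k) v) = (Z' ^ k) v' :=
    LinearMap.apply_pow_apply_eq_of_charpoly_eq hcp G.toLinearMap LinearMap.id v v'
      fun k hk => by simpa [b, b', G] using b.equiv_apply ⟨k, hd ▸ hk⟩ b' (Equiv.refl _)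
  refine ⟨G, b'.ext fun i => ?_, hG⟩
  rw [LinearEquiv.conj_apply_apply, krylovBasis_apply, ← hG, LinearEquiv.symm_apply_apply,
    ← Module.End.mul_apply, ← pow_succ', hG, hG, pow_succ', Module.End.mul_apply]

theorem LinearEquiv.eq_of_conj_eq {M' : Type*} [AddCommGroup M'] [Module K M']
    {Z : Module.End K M} {Z' : Module.End K M'} {v : M}
    (hZ : LinearIndependent K fun i : Fin d => (Z ^ (i : ℕ)) v) (hd : finrank K M = d)
    {G₁ G₂ : M ≃ₗ[K] M'} (h₁ : G₁.conj Z = Z') (h₂ : G₂.conj Z = Z') (hv : G₁ v = G₂ v) :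
    G₁ = G₂ :=
  LinearEquiv.toLinearMap_injective <| (krylovBasis Z v hZ hd).ext fun i => by
    simp [map_pow_apply_of_conj_eq h₁, map_pow_apply_of_conj_eq h₂, hv]

end Krylov

section ProdCongr

variable {R V : Type*} [CommRing R] [AddCommGroup V] [Module R V]

theorem LinearMap.apply_eq_of_apply_zero_one {L : (V × R) →ₗ[R] (V × R)} (h0 : L (0, 1) = (0, 1))
    (hsnd : ∀ w, (L w).2 = w.2) (v : V) (t : R) : L (v, t) = ((L (v, 0)).1, t) := by
  have hsplit : ((v, t) : V × R) = (v, 0) + t • (0, 1) := by simp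
  rw [hsplit, map_add, map_smul, h0]
  ext <;> simp [hsnd]

theorem LinearEquiv.exists_eq_prodCongr_refl {G : (V × R) ≃ₗ[R] (V × R)} (h0 : G (0, 1) = (0, 1))
    (hsnd : ∀ w, (G w).2 = w.2) : ∃ g : V ≃ₗ[R] V, G = g.prodCongr (LinearEquiv.refl R R) := by
  have h0' : G.symm (0, 1) = (0, 1) := G.symm_apply_eq.mpr h0.symm
  have hsnd' : ∀ w, (G.symm w).2 = w.2 := fun w => by
    conv_rhs => rw [← G.apply_symm_apply w, hsnd]
  have hG := LinearMap.apply_eq_of_apply_zero_one (L := G.toLinearMap) h0 hsnd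
  have hG' := LinearMap.apply_eq_of_apply_zero_one (L := G.symm.toLinearMap) h0' hsnd'
  simp only [LinearEquiv.coe_coe] at hG hG'
  let g : V ≃ₗ[R] V := .ofLinearMap (.fst R V R ∘ₗ G.toLinearMap ∘ₗ .inl R V R)
    (.fst R V R ∘ₗ G.symm.toLinearMap ∘ₗ .inl R V R)
    (LinearMap.ext fun v => by simp [← hG' v 0])
    (LinearMap.ext fun v => by simp [← hG v 0])
  exact ⟨g, LinearEquiv.ext fun ⟨v, t⟩ => hG v t⟩

end ProdCongr

theorem exists_prodCongr_conj_eq_of_charpoly_eq {K V : Type*} [Field K] [AddCommGroup V]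
    [Module K V] [FiniteDimensional K V] {Y Y' : Module.End K (V × K)} {d : ℕ}
    (hY : LinearIndependent K fun i : Fin d => (Y ^ (i : ℕ)) (0, 1))
    (hY' : LinearIndependent K fun i : Fin d => (Y' ^ (i : ℕ)) (0, 1))
    (hd : finrank K (V × K) = d) (hcp : Y.charpoly = Y'.charpoly)
    (hmom : ∀ i < d, ((Y ^ i) (0, 1)).2 = ((Y' ^ i) (0, 1)).2) :
    ∃ g : V ≃ₗ[K] V, (g.prodCongr (LinearEquiv.refl K K)).conj Y = Y' := by
  obtain ⟨G, hG, hGpow⟩ := exists_conj_eq_of_charpoly_eq hY hY' hd hcp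
  have hsnd : LinearMap.snd K V K ∘ₗ G.toLinearMap = LinearMap.snd K V K :=
    (krylovBasis Y (0, 1) hY hd).ext fun i => by simp [hGpow, hmom i i.2]
  obtain ⟨g, rfl⟩ :=
    G.exists_eq_prodCongr_refl (by simpa using hGpow 0) (LinearMap.congr_fun hsnd)
  exact ⟨g, hG⟩

theorem stmt_9_general (F : Type*) [Field F]
    (V : Type*) [AddCommGroup V] [Module F V] [FiniteDimensional F V]
    (n : ℕ) (hn : Module.finrank F V = n)
    (Y Y' : (V × F) →ₗ[F] (V × F))
    (hreg : (Matrix.of fun i j : Fin (n + 1) =>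
        LinearMap.snd F V F ((Y ^ ((i : ℕ) + (j : ℕ))) ((0 : V), (1 : F)))).det ≠ 0) :
    ((∃ g : V ≃ₗ[F] V,
        Y' = (g.toLinearMap.prodMap (LinearMap.id : F →ₗ[F] F)) ∘ₗ Y ∘ₗ
          (g.symm.toLinearMap.prodMap (LinearMap.id : F →ₗ[F] F))) ↔
      (LinearMap.charpoly Y = LinearMap.charpoly Y' ∧
        ∀ i ≤ n, LinearMap.snd F V F ((Y ^ i) ((0 : V), (1 : F))) =
          LinearMap.snd F V F ((Y' ^ i) ((0 : V), (1 : F))))) ∧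
    ∀ g₁ g₂ : V ≃ₗ[F] V,
      Y' = (g₁.toLinearMap.prodMap (LinearMap.id : F →ₗ[F] F)) ∘ₗ Y ∘ₗ
          (g₁.symm.toLinearMap.prodMap (LinearMap.id : F →ₗ[F] F)) →
      Y' = (g₂.toLinearMap.prodMap (LinearMap.id : F →ₗ[F] F)) ∘ₗ Y ∘ₗ
          (g₂.symm.toLinearMap.prodMap (LinearMap.id : F →ₗ[F] F)) →
      g₁ = g₂ := by
  have hW : finrank F (V × F) = n + 1 := by simp [hn]
  replace hreg : (hankelMatrix (LinearMap.snd F V F) Y (0, 1) (n + 1)).det ≠ 0 := hreg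
  have hY := linearIndependent_pow_apply_of_det_hankelMatrix_ne_zero hreg
  have hconj (g : V ≃ₗ[F] V) : g.toLinearMap.prodMap LinearMap.id ∘ₗ Y ∘ₗ
      g.symm.toLinearMap.prodMap LinearMap.id = (g.prodCongr (LinearEquiv.refl F F)).conj Y := rfl
  simp only [hconj]
  refine ⟨⟨?_, ?_⟩, ?_⟩
  · rintro ⟨g, rfl⟩
    refine ⟨(LinearEquiv.charpoly_conj _ _).symm, fun i _ => ?_⟩
    simpa using congrArg Prod.snd
      (LinearEquiv.map_pow_apply_of_conj_eq (G := g.prodCongr (.refl F F)) rfl i (0, 1))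
  · rintro ⟨hcp, hmom⟩
    have hmom' : ∀ k < finrank F (V × F),
        LinearMap.snd F V F ((Y ^ k) (0, 1)) = LinearMap.snd F V F ((Y' ^ k) (0, 1)) :=
      fun k hk => hmom k (by omega)
    have hY' := linearIndependent_pow_apply_of_det_hankelMatrix_ne_zero
      (hankelMatrix_eq_of_charpoly_eq hcp hmom' (n + 1) ▸ hreg)
    obtain ⟨g, hg⟩ := exists_prodCongr_conj_eq_of_charpoly_eq hY hY' hW hcp (hW ▸ hmom')
    exact ⟨g, hg.symm⟩
  · rintro g₁ g₂ rfl h₂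
    have h := LinearEquiv.eq_of_conj_eq hY hW rfl h₂.symm (by simp)
    exact LinearEquiv.ext fun v => congrArg Prod.fst (LinearEquiv.congr_fun h (v, 0))

/-- Let `W = V ⊕ F e₀` (modelled as `V × F`, with `e₀ = (0,1)` and
`e₀* = snd`), and let `GL(V)` act on `End(W)` by conjugation through `g ↦ g ⊕ id`.
For `Y` regular semisimple (i.e. `det ((e₀* (Y^{i+j} e₀)))_{0 ≤ i,j ≤ n} ≠ 0`), an
endomorphism `Y'` is `GL(V)`-conjugate to `Y` iff `Y` and `Y'` have the same characteristic
polynomial and the same invariants `e₀* (Y^i e₀)`, `0 ≤ i ≤ n`; and the conjugating element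
is unique. -/
theorem stmt_9 (F : Type*) [Field F] [CharZero F]
    (V : Type*) [AddCommGroup V] [Module F V] [FiniteDimensional F V]
    (n : ℕ) (hn : Module.finrank F V = n)
    (Y Y' : (V × F) →ₗ[F] (V × F))
    (hreg : (Matrix.of fun i j : Fin (n + 1) =>
        LinearMap.snd F V F ((Y ^ ((i : ℕ) + (j : ℕ))) ((0 : V), (1 : F)))).det ≠ 0) :
    ((∃ g : V ≃ₗ[F] V,
        Y' = (g.toLinearMap.prodMap (LinearMap.id : F →ₗ[F] F)) ∘ₗ Y ∘ₗ
          (g.symm.toLinearMap.prodMap (LinearMap.id : F →ₗ[F] F))) ↔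
      (LinearMap.charpoly Y = LinearMap.charpoly Y' ∧
        ∀ i ≤ n, LinearMap.snd F V F ((Y ^ i) ((0 : V), (1 : F))) =
          LinearMap.snd F V F ((Y' ^ i) ((0 : V), (1 : F))))) ∧
    ∀ g₁ g₂ : V ≃ₗ[F] V,
      Y' = (g₁.toLinearMap.prodMap (LinearMap.id : F →ₗ[F] F)) ∘ₗ Y ∘ₗ
          (g₁.symm.toLinearMap.prodMap (LinearMap.id : F →ₗ[F] F)) →
      Y' = (g₂.toLinearMap.prodMap (LinearMap.id : F →ₗ[F] F)) ∘ₗ Y ∘ₗ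
          (g₂.symm.toLinearMap.prodMap (LinearMap.id : F →ₗ[F] F)) →
      g₁ = g₂ :=
  stmt_9_general F V n hn Y Y' hreg
end

section
/- Let E/F be a quadratic extension of fields of characteristic zero, σ the nontrivial F-automorphism of E (acting entrywise on matrices over E), τ ∈ E× an element with σ(τ) = -τ, and ξ ∈ E× with ξ·σ(ξ) = 1. Let m ≥ 1. For Y ∈ M_m(F) with det(Y² - τ²·1) ≠ 0 (computed in M_m(E)), the matrix 1 - τ⁻¹Y is invertible and one sets κ(Y) = -ξ·(1 + τ⁻¹Y)·(1 - τ⁻¹Y)⁻¹ ∈ M_m(E). Then κ is a bijection from {Y ∈ M_m(F) : det(Y² - τ²·1) ≠ 0} onto {x ∈ GL_m(E) : x·σ(x) = 1 and det(x - ξ·1)·σ(det(x - ξ·1)) ≠ 0}, with inverse x ↦ τ·(x - ξ·1)⁻¹·(x + ξ·1), and it satisfies κ(g Y g⁻¹) = g·κ(Y)·g⁻¹ for every g ∈ GL_m(F). -/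
/-!
Writing `W = τ⁻¹ Y` and `u = -ξ⁻¹ x`, the map `κ` is the classical Cayley transform
`u = (1 + W)(1 - W)⁻¹`, with inverse `W = (u + 1)⁻¹(u - 1)`: both identities say
`u (1 - W) = 1 + W`, and then `(u + 1)(1 - W) = 2` shows that `1 - W` and `u + 1` are invertible
together. As `σ τ = -τ`, the matrix `Y` has entries in `F` iff `σ W = -W`; applying `σ` entrywise
turns the transform of `W` into that of `-W`, which is its inverse, and dually `x σ(x) = 1` makes
`σ` send `u` to `u⁻¹`, whose inverse transform is `-W`. Entries fixed by `σ` lie in `F` because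
the fixed subalgebra of a nontrivial automorphism of a prime-degree extension is `F`.
-/

/-- The Cayley map `κ(Y) = -ξ (1 + τ⁻¹ Y)(1 - τ⁻¹ Y)⁻¹`, from `m × m` matrices over `F`
to `m × m` matrices over `E`. -/
noncomputable def cayley (F E : Type*) [Field F] [Field E] [Algebra F E]
    (τ ξ : E) (m : ℕ) (Y : Matrix (Fin m) (Fin m) F) : Matrix (Fin m) (Fin m) E :=
  (-ξ) • ((1 + τ⁻¹ • Y.map (algebraMap F E)) * (1 - τ⁻¹ • Y.map (algebraMap F E))⁻¹)

theorem sub_smul_eq_neg_smul_add {K V : Type*} [Field K] [AddCommGroup V] [Module K V] {ξ : K}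
    (hξ : ξ ≠ 0) (x y : V) : x - ξ • y = (-ξ) • ((-ξ)⁻¹ • x + y) := by
  rw [smul_add, smul_inv_smul₀ (neg_ne_zero.2 hξ), neg_smul, sub_eq_add_neg]

namespace Matrix

variable {n K : Type*} [Fintype n] [DecidableEq n] [Field K]

theorem map_nonsing_inv {L Φ : Type*} [Field L] [FunLike Φ K L] [RingHomClass Φ K L] (f : Φ)
    (A : Matrix n n K) : A⁻¹.map f = (A.map f)⁻¹ := by
  have h := RingHom.map_adjugate (f : K →+* L) A
  have hd := RingHom.map_det (f : K →+* L) A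
  simp only [RingHom.mapMatrix_apply, RingHom.coe_coe] at h hd
  rw [inv_def, inv_def, ← h, ← hd, Matrix.map_smul' _ _ _ (map_mul f), Ring.inverse_eq_inv',
    Ring.inverse_eq_inv', map_inv₀]

theorem smul_nonsing_inv {c : K} (hc : c ≠ 0) (A : Matrix n n K) : (c • A)⁻¹ = c⁻¹ • A⁻¹ := by
  have hc1 : (c • (1 : Matrix n n K))⁻¹ = c⁻¹ • 1 :=
    inv_eq_left_inv (by rw [smul_mul_smul, one_mul, inv_mul_cancel₀ hc, one_smul])
  rw [← smul_one_mul, mul_inv_rev, hc1, mul_smul_one]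

theorem isUnit_smul_iff_of_ne_zero {c : K} (hc : c ≠ 0) (A : Matrix n n K) :
    IsUnit (c • A) ↔ IsUnit A :=
  isUnit_smul_iff (Units.mk0 c hc) A

theorem isUnit_and_isUnit_of_mul_eq_two {A B : Matrix n n K} (h2 : (2 : K) ≠ 0) (h : A * B = 2) :
    IsUnit A ∧ IsUnit B := by
  have hAB : IsUnit (A * B) := by
    have h2' := (isUnit_iff_ne_zero.2 h2).map (algebraMap K (Matrix n n K))
    rwa [map_ofNat, ← h] at h2'
  rw [isUnit_iff_isUnit_det, det_mul, IsUnit.mul_iff] at hAB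
  simpa only [isUnit_iff_isUnit_det] using hAB

noncomputable def cayleyTransform (W : Matrix n n K) : Matrix n n K := (1 + W) * (1 - W)⁻¹

noncomputable def cayleyTransformInv (u : Matrix n n K) : Matrix n n K := (u + 1)⁻¹ * (u - 1)

theorem mul_one_sub_eq_one_add_iff {u W : Matrix n n K} :
    u * (1 - W) = 1 + W ↔ (u + 1) * W = u - 1 := by
  have h : -(u * (1 - W) - (1 + W)) = (u + 1) * W - (u - 1) := by noncomm_ring
  rw [← sub_eq_zero, ← neg_eq_zero, h, sub_eq_zero]

theorem add_one_mul_one_sub_eq_two {u W : Matrix n n K} (h : u * (1 - W) = 1 + W) :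
    (u + 1) * (1 - W) = 2 := by
  rw [add_mul, h, one_mul, add_add_sub_cancel, one_add_one_eq_two]

variable {W u : Matrix n n K}

theorem cayleyTransform_mul_one_sub (hW : IsUnit (1 - W)) :
    cayleyTransform W * (1 - W) = 1 + W :=
  nonsing_inv_mul_cancel_right _ _ ((isUnit_iff_isUnit_det _).1 hW)

theorem add_one_mul_cayleyTransformInv (hu : IsUnit (u + 1)) :
    (u + 1) * cayleyTransformInv u = u - 1 :=
  mul_nonsing_inv_cancel_left _ _ ((isUnit_iff_isUnit_det _).1 hu)

theorem isUnit_cayleyTransform_add_one (h2 : (2 : K) ≠ 0) (hW : IsUnit (1 - W)) :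
    IsUnit (cayleyTransform W + 1) :=
  (isUnit_and_isUnit_of_mul_eq_two h2
    (add_one_mul_one_sub_eq_two (cayleyTransform_mul_one_sub hW))).1

theorem isUnit_one_sub_cayleyTransformInv (h2 : (2 : K) ≠ 0) (hu : IsUnit (u + 1)) :
    IsUnit (1 - cayleyTransformInv u) :=
  (isUnit_and_isUnit_of_mul_eq_two h2 (add_one_mul_one_sub_eq_two
    (mul_one_sub_eq_one_add_iff.2 (add_one_mul_cayleyTransformInv hu)))).2

theorem isUnit_cayleyTransform (hadd : IsUnit (1 + W)) (hsub : IsUnit (1 - W)) :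
    IsUnit (cayleyTransform W) :=
  hadd.mul ((isUnit_iff_isUnit_det _).2
    (isUnit_nonsing_inv_det _ ((isUnit_iff_isUnit_det _).1 hsub)))

theorem isUnit_one_add_cayleyTransformInv (h2 : (2 : K) ≠ 0) (hu : IsUnit u)
    (hadd : IsUnit (u + 1)) : IsUnit (1 + cayleyTransformInv u) := by
  rw [← mul_one_sub_eq_one_add_iff.2 (add_one_mul_cayleyTransformInv hadd)]
  exact hu.mul (isUnit_one_sub_cayleyTransformInv h2 hadd)

theorem cayleyTransformInv_cayleyTransform (h2 : (2 : K) ≠ 0) (hW : IsUnit (1 - W)) :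
    cayleyTransformInv (cayleyTransform W) = W := by
  rw [cayleyTransformInv, ← mul_one_sub_eq_one_add_iff.1 (cayleyTransform_mul_one_sub hW),
    nonsing_inv_mul_cancel_left _ _
      ((isUnit_iff_isUnit_det _).1 (isUnit_cayleyTransform_add_one h2 hW))]

theorem cayleyTransform_cayleyTransformInv (h2 : (2 : K) ≠ 0) (hu : IsUnit (u + 1)) :
    cayleyTransform (cayleyTransformInv u) = u := by
  rw [cayleyTransform, ← mul_one_sub_eq_one_add_iff.2 (add_one_mul_cayleyTransformInv hu),
    mul_nonsing_inv_cancel_right _ _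
      ((isUnit_iff_isUnit_det _).1 (isUnit_one_sub_cayleyTransformInv h2 hu))]

theorem cayleyTransform_mul_cayleyTransform_neg (hadd : IsUnit (1 + W)) (hsub : IsUnit (1 - W)) :
    cayleyTransform W * cayleyTransform (-W) = 1 := by
  rw [cayleyTransform, cayleyTransform, sub_neg_eq_add, ← sub_eq_add_neg, mul_assoc,
    nonsing_inv_mul_cancel_left _ _ ((isUnit_iff_isUnit_det _).1 hsub),
    mul_nonsing_inv _ ((isUnit_iff_isUnit_det _).1 hadd)]

theorem cayleyTransformInv_nonsing_inv (hu : IsUnit u) :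
    cayleyTransformInv u⁻¹ = -cayleyTransformInv u := by
  have hu' := (isUnit_iff_isUnit_det _).1 hu
  have hadd : u⁻¹ + 1 = u⁻¹ * (u + 1) := by rw [mul_add, nonsing_inv_mul _ hu', mul_one, add_comm]
  have hsub : u⁻¹ - 1 = -(u⁻¹ * (u - 1)) := by rw [mul_sub, nonsing_inv_mul _ hu', mul_one, neg_sub]
  rw [cayleyTransformInv, cayleyTransformInv, hadd, hsub, mul_inv_rev,
    nonsing_inv_nonsing_inv _ hu', mul_neg, mul_assoc, mul_nonsing_inv_cancel_left _ _ hu']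

theorem map_cayleyTransform {L Φ : Type*} [Field L] [FunLike Φ K L] [RingHomClass Φ K L] (f : Φ)
    (W : Matrix n n K) : (cayleyTransform W).map f = cayleyTransform (W.map f) := by
  simp [cayleyTransform, Matrix.map_mul, Matrix.map_add, Matrix.map_sub, map_nonsing_inv]

theorem map_cayleyTransformInv {L Φ : Type*} [Field L] [FunLike Φ K L] [RingHomClass Φ K L] (f : Φ)
    (u : Matrix n n K) : (cayleyTransformInv u).map f = cayleyTransformInv (u.map f) := by
  simp [cayleyTransformInv, Matrix.map_mul, Matrix.map_add, Matrix.map_sub, map_nonsing_inv]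

theorem cayleyTransform_units_conj (G : (Matrix n n K)ˣ) (W : Matrix n n K) :
    cayleyTransform ((G : Matrix n n K) * W * (↑G⁻¹ : Matrix n n K)) =
      (G : Matrix n n K) * cayleyTransform W * (↑G⁻¹ : Matrix n n K) := by
  set g : Matrix n n K := ↑G
  set g' : Matrix n n K := ↑G⁻¹
  have hmul (A B : Matrix n n K) : (g * A * g') * (g * B * g') = g * (A * B) * g' := by
    simp only [g, g', mul_assoc, Units.inv_mul_cancel_left]
  have hinv (A : Matrix n n K) : (g * A * g')⁻¹ = g * A⁻¹ * g' := by
    rw [mul_inv_rev, mul_inv_rev, ← coe_units_inv, ← coe_units_inv, inv_inv, mul_assoc]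
  have hadd : 1 + g * W * g' = g * (1 + W) * g' := by
    rw [mul_add, add_mul, mul_one, Units.mul_inv]
  have hsub : 1 - g * W * g' = g * (1 - W) * g' := by
    rw [mul_sub, sub_mul, mul_one, Units.mul_inv]
  rw [cayleyTransform, cayleyTransform, hadd, hsub, hinv, hmul]

/-- `cayley F E τ ξ m Y` unfolds to `cayleyMap τ ξ (Y.map (algebraMap F E))`. -/
noncomputable def cayleyMap (τ ξ : K) (Z : Matrix n n K) : Matrix n n K :=
  (-ξ) • cayleyTransform (τ⁻¹ • Z)

noncomputable def cayleyMapInv (τ ξ : K) (x : Matrix n n K) : Matrix n n K :=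
  τ • ((x - ξ • 1)⁻¹ * (x + ξ • 1))

def cayleySource (τ : K) : Set (Matrix n n K) := {Z | IsUnit (1 + τ⁻¹ • Z) ∧ IsUnit (1 - τ⁻¹ • Z)}

def cayleyTarget (ξ : K) : Set (Matrix n n K) := {x | IsUnit x ∧ IsUnit (x - ξ • 1)}

theorem mem_cayleySource_iff {τ : K} (hτ : τ ≠ 0) (Z : Matrix n n K) :
    Z ∈ cayleySource τ ↔ (Z ^ 2 - τ ^ 2 • 1).det ≠ 0 := by
  have hfactor : Z ^ 2 - τ ^ 2 • 1 = (-τ ^ 2) • ((1 + τ⁻¹ • Z) * (1 - τ⁻¹ • Z)) := by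
    rw [← (Commute.one_left _).mul_self_sub_mul_self_eq, mul_one, smul_mul_smul, smul_sub,
      smul_smul, show -τ ^ 2 * (τ⁻¹ * τ⁻¹) = -1 by field_simp, neg_one_smul, sub_neg_eq_add, sq Z,
      neg_smul]
    abel
  rw [hfactor, det_smul, det_mul]
  simp [cayleySource, isUnit_iff_isUnit_det, hτ]

variable {τ ξ : K}

theorem cayleyMapInv_eq (hξ : ξ ≠ 0) (x : Matrix n n K) :
    cayleyMapInv τ ξ x = τ • cayleyTransformInv ((-ξ)⁻¹ • x) := by
  have hadd : x + ξ • 1 = (-ξ) • ((-ξ)⁻¹ • x - 1) := by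
    rw [smul_sub, smul_inv_smul₀ (neg_ne_zero.2 hξ), neg_smul, sub_neg_eq_add]
  rw [cayleyMapInv, cayleyTransformInv, sub_smul_eq_neg_smul_add hξ, hadd,
    smul_nonsing_inv (neg_ne_zero.2 hξ), smul_mul_smul, inv_mul_cancel₀ (neg_ne_zero.2 hξ),
    one_smul]

theorem cayleyMap_sub_smul_one (Z : Matrix n n K) :
    cayleyMap τ ξ Z - ξ • 1 = (-ξ) • (cayleyTransform (τ⁻¹ • Z) + 1) := by
  rw [cayleyMap, smul_add]
  module

theorem mapsTo_cayleyMap (h2 : (2 : K) ≠ 0) (hξ : ξ ≠ 0) :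
    Set.MapsTo (cayleyMap τ ξ) (cayleySource τ : Set (Matrix n n K)) (cayleyTarget ξ) := by
  rintro Z ⟨hadd, hsub⟩
  refine ⟨(isUnit_smul_iff_of_ne_zero (neg_ne_zero.2 hξ) _).2
    (isUnit_cayleyTransform hadd hsub), ?_⟩
  rw [cayleyMap_sub_smul_one, isUnit_smul_iff_of_ne_zero (neg_ne_zero.2 hξ)]
  exact isUnit_cayleyTransform_add_one h2 hsub

theorem mapsTo_cayleyMapInv (h2 : (2 : K) ≠ 0) (hτ : τ ≠ 0) (hξ : ξ ≠ 0) :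
    Set.MapsTo (cayleyMapInv τ ξ) (cayleyTarget ξ : Set (Matrix n n K)) (cayleySource τ) := by
  rintro x ⟨hx, hxξ⟩
  rw [sub_smul_eq_neg_smul_add hξ, isUnit_smul_iff_of_ne_zero (neg_ne_zero.2 hξ)] at hxξ
  rw [cayleySource, Set.mem_ofPred_eq, cayleyMapInv_eq hξ, inv_smul_smul₀ hτ]
  exact ⟨isUnit_one_add_cayleyTransformInv h2
    ((isUnit_smul_iff_of_ne_zero (inv_ne_zero (neg_ne_zero.2 hξ)) _).2 hx) hxξ,
    isUnit_one_sub_cayleyTransformInv h2 hxξ⟩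

theorem invOn_cayleyMapInv_cayleyMap (h2 : (2 : K) ≠ 0) (hτ : τ ≠ 0) (hξ : ξ ≠ 0) :
    Set.InvOn (cayleyMapInv τ ξ) (cayleyMap τ ξ) (cayleySource τ : Set (Matrix n n K))
      (cayleyTarget ξ) := by
  constructor
  · rintro Z ⟨-, hsub⟩
    rw [cayleyMapInv_eq hξ, cayleyMap, inv_smul_smul₀ (neg_ne_zero.2 hξ),
      cayleyTransformInv_cayleyTransform h2 hsub, smul_inv_smul₀ hτ]
  · rintro x ⟨-, hxξ⟩
    rw [sub_smul_eq_neg_smul_add hξ, isUnit_smul_iff_of_ne_zero (neg_ne_zero.2 hξ)] at hxξ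
    rw [cayleyMap, cayleyMapInv_eq hξ, inv_smul_smul₀ hτ, cayleyTransform_cayleyTransformInv h2 hxξ,
      smul_inv_smul₀ (neg_ne_zero.2 hξ)]

theorem cayleyMap_units_conj (G : (Matrix n n K)ˣ) (Z : Matrix n n K) :
    cayleyMap τ ξ ((G : Matrix n n K) * Z * (↑G⁻¹ : Matrix n n K)) =
      (G : Matrix n n K) * cayleyMap τ ξ Z * (↑G⁻¹ : Matrix n n K) := by
  rw [cayleyMap, cayleyMap, show τ⁻¹ • ((G : Matrix n n K) * Z * ↑G⁻¹) = G * (τ⁻¹ • Z) * ↑G⁻¹ by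
    simp only [Matrix.mul_smul, Matrix.smul_mul], cayleyTransform_units_conj]
  simp only [Matrix.mul_smul, Matrix.smul_mul]

section EntrywiseAutomorphism

variable {Φ : Type*} [FunLike Φ K K] [RingHomClass Φ K K] {σ : Φ}

theorem cayleyMap_mul_map_cayleyMap (hτσ : σ τ = -τ) (hξσ : ξ * σ ξ = 1) {Z : Matrix n n K}
    (hZ : Z.map σ = Z) (hZτ : Z ∈ cayleySource τ) :
    cayleyMap τ ξ Z * (cayleyMap τ ξ Z).map σ = 1 := by
  rw [cayleyMap, map_smul' _ _ _ (map_mul σ), map_cayleyTransform, map_smul' _ _ _ (map_mul σ), hZ,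
    map_inv₀, hτσ, inv_neg, neg_smul τ⁻¹ Z, smul_mul_smul,
    cayleyTransform_mul_cayleyTransform_neg hZτ.1 hZτ.2, map_neg, neg_mul_neg, hξσ, one_smul]

theorem map_cayleyMapInv (hτσ : σ τ = -τ) (hξσ : ξ * σ ξ = 1) {x : Matrix n n K}
    (hx : IsUnit x) (hxσ : x * x.map σ = 1) : (cayleyMapInv τ ξ x).map σ = cayleyMapInv τ ξ x := by
  have hξ : ξ ≠ 0 := left_ne_zero_of_mul_eq_one hξσ
  have hu : ((-ξ)⁻¹ • x).map σ = ((-ξ)⁻¹ • x)⁻¹ := by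
    rw [map_smul' _ _ _ (map_mul σ), ← inv_eq_right_inv hxσ, smul_nonsing_inv
      (inv_ne_zero (neg_ne_zero.2 hξ)), map_inv₀, map_neg, eq_inv_of_mul_eq_one_right hξσ]
    simp only [inv_neg, inv_inv]
  rw [cayleyMapInv_eq hξ, map_smul' _ _ _ (map_mul σ), map_cayleyTransformInv, hu,
    cayleyTransformInv_nonsing_inv
      ((isUnit_smul_iff_of_ne_zero (inv_ne_zero (neg_ne_zero.2 hξ)) _).2 hx),
    hτσ, neg_smul_neg]

end EntrywiseAutomorphism

end Matrix

theorem exists_algebraMap_eq_of_apply_eq_self {F E : Type*} [Field F] [Field E] [Algebra F E]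
    (hp : (Module.finrank F E).Prime) {σ : E ≃ₐ[F] E} (hσ : σ ≠ AlgEquiv.refl) {e : E}
    (he : σ e = e) : ∃ a : F, algebraMap F E a = e := by
  have := Subalgebra.isSimpleOrder_of_finrank_prime F E hp
  obtain hbot | htop := eq_bot_or_eq_top (AlgHom.equalizer (σ : E →ₐ[F] E) (AlgHom.id F E))
  · exact Algebra.mem_bot.1 (hbot ▸ he)
  · exact absurd (AlgEquiv.ext fun x => (htop ▸ Algebra.mem_top : x ∈ _)) hσ

theorem Matrix.exists_map_algebraMap_eq_of_map_eq_self {F E m n : Type*} [Field F] [Field E]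
    [Algebra F E] (hp : (Module.finrank F E).Prime) {σ : E ≃ₐ[F] E} (hσ : σ ≠ AlgEquiv.refl)
    {Z : Matrix m n E}
    (hZ : Z.map σ = Z) : ∃ Y : Matrix m n F, Y.map (algebraMap F E) = Z := by
  choose Y hY using fun i j =>
    exists_algebraMap_eq_of_apply_eq_self hp hσ (congrFun (congrFun hZ i) j)
  exact ⟨Matrix.of Y, Matrix.ext hY⟩

theorem stmt_13_general (F E : Type*) [Field F] [Field E] [CharZero E] [Algebra F E]
    (hquad : Module.finrank F E = 2)
    (σ : E ≃ₐ[F] E) (hσ : σ ≠ AlgEquiv.refl)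
    (τ : E) (hτ0 : τ ≠ 0) (hτσ : σ τ = -τ)
    (ξ : E) (hξ : ξ * σ ξ = 1)
    (m : ℕ) :
    -- the matrix `1 - τ⁻¹ Y` is invertible on the domain
    (∀ Y : Matrix (Fin m) (Fin m) F,
        ((Y.map (algebraMap F E)) ^ 2 - τ ^ 2 • (1 : Matrix (Fin m) (Fin m) E)).det ≠ 0 →
        IsUnit (1 - τ⁻¹ • Y.map (algebraMap F E))) ∧
    -- `κ` is a bijection between the two loci
    Set.BijOn (cayley F E τ ξ m)
      {Y : Matrix (Fin m) (Fin m) F |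
        ((Y.map (algebraMap F E)) ^ 2 - τ ^ 2 • (1 : Matrix (Fin m) (Fin m) E)).det ≠ 0}
      {x : Matrix (Fin m) (Fin m) E | IsUnit x ∧ x * x.map ⇑σ = 1 ∧
        (x - ξ • 1).det * σ ((x - ξ • 1).det) ≠ 0} ∧
    -- the inverse of `κ` is `x ↦ τ (x - ξ)⁻¹ (x + ξ)`
    (∀ Y : Matrix (Fin m) (Fin m) F,
        ((Y.map (algebraMap F E)) ^ 2 - τ ^ 2 • (1 : Matrix (Fin m) (Fin m) E)).det ≠ 0 →
        τ • ((cayley F E τ ξ m Y - ξ • 1)⁻¹ * (cayley F E τ ξ m Y + ξ • 1)) =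
          Y.map (algebraMap F E)) ∧
    -- `GL_m(F)`-equivariance
    (∀ (g : (Matrix (Fin m) (Fin m) F)ˣ) (Y : Matrix (Fin m) (Fin m) F),
        ((Y.map (algebraMap F E)) ^ 2 - τ ^ 2 • (1 : Matrix (Fin m) (Fin m) E)).det ≠ 0 →
        cayley F E τ ξ m ((↑g : Matrix (Fin m) (Fin m) F) * Y * (↑g⁻¹ : Matrix (Fin m) (Fin m) F)) =
          ((g : Matrix (Fin m) (Fin m) F).map (algebraMap F E)) * cayley F E τ ξ m Y *
            ((↑g⁻¹ : Matrix (Fin m) (Fin m) F).map (algebraMap F E))) := by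
  have h2 : (2 : E) ≠ 0 := two_ne_zero
  have hξ0 : ξ ≠ 0 := left_ne_zero_of_mul_eq_one hξ
  have hdom (Y : Matrix (Fin m) (Fin m) F) :=
    Matrix.mem_cayleySource_iff hτ0 (Y.map (algebraMap F E))
  have hinv := Matrix.invOn_cayleyMapInv_cayleyMap h2 hτ0 hξ0 (n := Fin m)
  have hleft (Y : Matrix (Fin m) (Fin m) F)
      (hY : ((Y.map (algebraMap F E)) ^ 2 - τ ^ 2 • (1 : Matrix (Fin m) (Fin m) E)).det ≠ 0) :=
    hinv.1 ((hdom Y).2 hY)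
  refine ⟨fun Y hY => ((hdom Y).2 hY).2, ⟨fun Y hY => ?_, fun Y₁ h₁ Y₂ h₂ heq => ?_, ?_⟩, hleft, ?_⟩
  · obtain ⟨hunit, hsubξ⟩ := Matrix.mapsTo_cayleyMap h2 hξ0 ((hdom Y).2 hY)
    have hdet := ((Matrix.isUnit_iff_isUnit_det _).1 hsubξ).ne_zero
    exact ⟨hunit, Matrix.cayleyMap_mul_map_cayleyMap hτσ hξ (by ext; simp) ((hdom Y).2 hY),
      mul_ne_zero hdet ((map_ne_zero σ).2 hdet)⟩
  · exact Matrix.map_injective (algebraMap F E).injective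
      ((hleft Y₁ h₁).symm.trans ((congrArg _ heq).trans (hleft Y₂ h₂)))
  · rintro x ⟨hx, hxσ, hdet⟩
    have hx' : x ∈ Matrix.cayleyTarget ξ :=
      ⟨hx, (Matrix.isUnit_iff_isUnit_det _).2 (isUnit_iff_ne_zero.2 (left_ne_zero_of_mul hdet))⟩
    obtain ⟨Y, hY⟩ := Matrix.exists_map_algebraMap_eq_of_map_eq_self (hquad ▸ Nat.prime_two) hσ
      (Matrix.map_cayleyMapInv hτσ hξ hx hxσ)
    refine ⟨Y, (hdom Y).1 (hY ▸ Matrix.mapsTo_cayleyMapInv h2 hτ0 hξ0 hx'), ?_⟩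
    change Matrix.cayleyMap τ ξ _ = x
    rw [hY, hinv.2 hx']
  · intro g Y _
    rw [cayley, cayley, Matrix.map_mul, Matrix.map_mul]
    exact Matrix.cayleyMap_units_conj (Matrix.GeneralLinearGroup.map (algebraMap F E) g) _

/-- For `τ ∈ E×` with `σ τ = -τ` and `ξ ∈ E×` with `ξ σ(ξ) = 1`, the
Cayley map `κ` is a `GL_m(F)`-equivariant bijection from
`{Y ∈ M_m(F) : det (Y² - τ²) ≠ 0}` onto
`{x ∈ GL_m(E) : x σ(x) = 1, det(x - ξ) σ(det(x - ξ)) ≠ 0}`, the matrix `1 - τ⁻¹ Y`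
being invertible on this locus, with inverse `x ↦ τ (x - ξ)⁻¹ (x + ξ)`. -/
theorem stmt_13 (F E : Type*) [Field F] [Field E] [CharZero F] [CharZero E] [Algebra F E]
    (hquad : Module.finrank F E = 2)
    (σ : E ≃ₐ[F] E) (hσ : σ ≠ AlgEquiv.refl)
    (τ : E) (hτ0 : τ ≠ 0) (hτσ : σ τ = -τ)
    (ξ : E) (hξ : ξ * σ ξ = 1)
    (m : ℕ) (hm : 1 ≤ m) :
    -- the matrix `1 - τ⁻¹ Y` is invertible on the domain
    (∀ Y : Matrix (Fin m) (Fin m) F,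
        ((Y.map (algebraMap F E)) ^ 2 - τ ^ 2 • (1 : Matrix (Fin m) (Fin m) E)).det ≠ 0 →
        IsUnit (1 - τ⁻¹ • Y.map (algebraMap F E))) ∧
    -- `κ` is a bijection between the two loci
    Set.BijOn (cayley F E τ ξ m)
      {Y : Matrix (Fin m) (Fin m) F |
        ((Y.map (algebraMap F E)) ^ 2 - τ ^ 2 • (1 : Matrix (Fin m) (Fin m) E)).det ≠ 0}
      {x : Matrix (Fin m) (Fin m) E | IsUnit x ∧ x * x.map ⇑σ = 1 ∧
        (x - ξ • 1).det * σ ((x - ξ • 1).det) ≠ 0} ∧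
    -- the inverse of `κ` is `x ↦ τ (x - ξ)⁻¹ (x + ξ)`
    (∀ Y : Matrix (Fin m) (Fin m) F,
        ((Y.map (algebraMap F E)) ^ 2 - τ ^ 2 • (1 : Matrix (Fin m) (Fin m) E)).det ≠ 0 →
        τ • ((cayley F E τ ξ m Y - ξ • 1)⁻¹ * (cayley F E τ ξ m Y + ξ • 1)) =
          Y.map (algebraMap F E)) ∧
    -- `GL_m(F)`-equivariance
    (∀ (g : (Matrix (Fin m) (Fin m) F)ˣ) (Y : Matrix (Fin m) (Fin m) F),
        ((Y.map (algebraMap F E)) ^ 2 - τ ^ 2 • (1 : Matrix (Fin m) (Fin m) E)).det ≠ 0 →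
        cayley F E τ ξ m ((↑g : Matrix (Fin m) (Fin m) F) * Y * (↑g⁻¹ : Matrix (Fin m) (Fin m) F)) =
          ((g : Matrix (Fin m) (Fin m) F).map (algebraMap F E)) * cayley F E τ ξ m Y *
            ((↑g⁻¹ : Matrix (Fin m) (Fin m) F).map (algebraMap F E))) :=
  stmt_13_general F E hquad σ hσ τ hτ0 hτσ ξ hξ m
end

section
/- Let O be an integral domain with fraction field K, n ≥ 0, and let e₀ be the last standard basis vector of K^{n+1} with e₀* the last coordinate linear form. Identify GL_n(K) with the subgroup of GL_{n+1}(K) of block-diagonal matrices diag(g,1). Let Y ∈ M_{n+1}(O) be such that the determinant of the (n+1)×(n+1) matrix with (i,j) entry e₀*(Y^{i+j} e₀), 0 ≤ i,j ≤ n, is a unit of O. If g ∈ GL_n(K) is such that g⁻¹ Y g has all its entries in O, then g ∈ GL_n(O), i.e. g has entries in O and det(g) is a unit of O. -/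
open Matrix


/-- Let `O` be an integral domain with fraction field `K`, and
`Y ∈ M_{n+1}(O)` with `det ((e₀* (Y^{i+j} e₀)))_{0 ≤ i,j ≤ n}` a unit of `O` (`e₀` the last
basis vector). If `g ∈ GL_n(K)` is such that `diag(g,1)⁻¹ · Y · diag(g,1)` has all its
entries in `O`, then `g` has entries in `O` and `det g` is a unit of `O`. -/
theorem stmt_15 (O K : Type*) [CommRing O] [IsDomain O] [Field K] [Algebra O K]
    [IsFractionRing O K] (n : ℕ)
    (Y : Matrix (Fin (n + 1)) (Fin (n + 1)) O)
    (hreg : IsUnit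
      ((Matrix.of fun i j : Fin (n + 1) =>
          (Y ^ ((i : ℕ) + (j : ℕ))) (Fin.last n) (Fin.last n)).det))
    (g : (Matrix (Fin n) (Fin n) K)ˣ)
    (hint : ∀ i j : Fin (n + 1),
      ((Matrix.reindex finSumFinEquiv finSumFinEquiv
          (Matrix.fromBlocks ((↑g⁻¹ : Matrix (Fin n) (Fin n) K)) 0 0 1) *
        Y.map (algebraMap O K) *
        Matrix.reindex finSumFinEquiv finSumFinEquiv
          (Matrix.fromBlocks ((↑g : Matrix (Fin n) (Fin n) K)) 0 0 1) :
              Matrix (Fin (n + 1)) (Fin (n + 1)) K)) i j ∈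
        (algebraMap O K).range) :
    (∀ i j : Fin n, (↑g : Matrix (Fin n) (Fin n) K) i j ∈ (algebraMap O K).range) ∧
      ∃ u : Oˣ, algebraMap O K (↑u : O) = (↑g : Matrix (Fin n) (Fin n) K).det := by
  classical
  set e : Fin n ⊕ Fin 1 ≃ Fin (n + 1) := finSumFinEquiv with he
  set G : Matrix (Fin (n+1)) (Fin (n+1)) K :=
    Matrix.reindex e e (Matrix.fromBlocks (↑g) 0 0 1) with hG
  set Gi : Matrix (Fin (n+1)) (Fin (n+1)) K :=
    Matrix.reindex e e (Matrix.fromBlocks (↑g⁻¹) 0 0 1) with hGi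
  set f : O →+* K := algebraMap O K with hf
  have hfinj : Function.Injective f := IsFractionRing.injective O K
  have hmap_pow : ∀ (M : Matrix (Fin (n+1)) (Fin (n+1)) O) (j : ℕ),
      (M ^ j).map f = (M.map f) ^ j := by
    intro M j
    rw [← RingHom.mapMatrix_apply, ← RingHom.mapMatrix_apply, map_pow]
  -- 1 as a reindexed block matrix
  have hone : (1 : Matrix (Fin (n+1)) (Fin (n+1)) K) =
      Matrix.reindex e e
        (Matrix.fromBlocks (1 : Matrix (Fin n) (Fin n) K) 0 0 1) := by
    rw [Matrix.fromBlocks_one, Matrix.reindex_apply, Matrix.submatrix_one_equiv]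
  have hgg1 := g.inv_mul
  have hgg2 := g.mul_inv
  have hGiG : Gi * G = 1 := by
    rw [hG, hGi, Matrix.reindex_apply, Matrix.reindex_apply,
      Matrix.submatrix_mul_equiv, Matrix.fromBlocks_multiply, hone,
      Matrix.reindex_apply]
    congr 1
    simp only [hgg1, Matrix.zero_mul, Matrix.mul_zero, Matrix.mul_one,
      Matrix.one_mul, add_zero, zero_add]
  have hGGi : G * Gi = 1 := by
    rw [hG, hGi, Matrix.reindex_apply, Matrix.reindex_apply,
      Matrix.submatrix_mul_equiv, Matrix.fromBlocks_multiply, hone,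
      Matrix.reindex_apply]
    congr 1
    simp only [hgg2, Matrix.zero_mul, Matrix.mul_zero, Matrix.mul_one,
      Matrix.one_mul, add_zero, zero_add]
  -- column and row facts
  have hcol : ∀ (h : Matrix (Fin n) (Fin n) K) (m : Fin (n+1)),
      (Matrix.reindex e e (Matrix.fromBlocks h 0 0 1)) m (Fin.last n)
        = (1 : Matrix (Fin (n+1)) (Fin (n+1)) K) m (Fin.last n) := by
    intro h m
    rw [hone, Matrix.reindex_apply, Matrix.reindex_apply,
      Matrix.submatrix_apply, Matrix.submatrix_apply, he,
      finSumFinEquiv_symm_last]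
    rcases hsm : finSumFinEquiv.symm m with i | i <;> simp [Matrix.fromBlocks]
  have hrow : ∀ (h : Matrix (Fin n) (Fin n) K) (m : Fin (n+1)),
      (Matrix.reindex e e (Matrix.fromBlocks h 0 0 1)) (Fin.last n) m
        = (1 : Matrix (Fin (n+1)) (Fin (n+1)) K) (Fin.last n) m := by
    intro h m
    rw [hone, Matrix.reindex_apply, Matrix.reindex_apply,
      Matrix.submatrix_apply, Matrix.submatrix_apply, he,
      finSumFinEquiv_symm_last]
    rcases hsm : finSumFinEquiv.symm m with i | i <;> simp [Matrix.fromBlocks]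
  have hmulG : ∀ (A : Matrix (Fin (n+1)) (Fin (n+1)) K) (k : Fin (n+1)),
      (A * G) k (Fin.last n) = A k (Fin.last n) := by
    intro A k
    have : (A * G) k (Fin.last n) = ((A * 1 : Matrix (Fin (n+1)) (Fin (n+1)) K)) k (Fin.last n) := by
      rw [Matrix.mul_apply, Matrix.mul_apply]
      exact Finset.sum_congr rfl fun m _ => by rw [hG, hcol]
    simpa using this
  have hGimul : ∀ (A : Matrix (Fin (n+1)) (Fin (n+1)) K) (k : Fin (n+1)),
      (Gi * A) (Fin.last n) k = A (Fin.last n) k := by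
    intro A k
    have : (Gi * A) (Fin.last n) k = ((1 : Matrix (Fin (n+1)) (Fin (n+1)) K) * A) (Fin.last n) k := by
      rw [Matrix.mul_apply, Matrix.mul_apply]
      exact Finset.sum_congr rfl fun m _ => by rw [hGi, hrow]
    simpa using this
  -- Z and its O-form
  set Z : Matrix (Fin (n+1)) (Fin (n+1)) K := Gi * Y.map f * G with hZ
  have hZint : ∀ i j, Z i j ∈ f.range := hint
  set Z' : Matrix (Fin (n+1)) (Fin (n+1)) O :=
    Matrix.of (fun i j => (hZint i j).choose) with hZ'
  have hZ'map : Z'.map f = Z := by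
    ext i j
    exact (hZint i j).choose_spec
  -- powers of Z
  have hZpow : ∀ j : ℕ, Z ^ j = Gi * (Y.map f) ^ j * G := by
    intro j
    induction j with
    | zero => simp [pow_zero, hGiG]
    | succ j ih =>
      rw [pow_succ, ih, hZ, pow_succ]
      rw [show Gi * (Y.map f) ^ j * G * (Gi * Y.map f * G)
          = Gi * (Y.map f) ^ j * (G * Gi) * (Y.map f * G) by
            simp only [mul_assoc], hGGi, mul_one]
      simp only [mul_assoc]
  -- P, Q, PZ, QZ
  set P : Matrix (Fin (n+1)) (Fin (n+1)) O :=
    Matrix.of (fun k j => (Y ^ (j : ℕ)) k (Fin.last n)) with hP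
  set Q : Matrix (Fin (n+1)) (Fin (n+1)) O :=
    Matrix.of (fun i k => (Y ^ (i : ℕ)) (Fin.last n) k) with hQ
  set PZ : Matrix (Fin (n+1)) (Fin (n+1)) O :=
    Matrix.of (fun k j => (Z' ^ (j : ℕ)) k (Fin.last n)) with hPZ
  set QZ : Matrix (Fin (n+1)) (Fin (n+1)) O :=
    Matrix.of (fun i k => (Z' ^ (i : ℕ)) (Fin.last n) k) with hQZ
  set B : Matrix (Fin (n+1)) (Fin (n+1)) O :=
    (Matrix.of fun i j : Fin (n + 1) =>
      (Y ^ ((i : ℕ) + (j : ℕ))) (Fin.last n) (Fin.last n)) with hB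
  have hQPgen : ∀ (W : Matrix (Fin (n+1)) (Fin (n+1)) O),
      (Matrix.of (fun i k : Fin (n+1) => (W ^ (i : ℕ)) (Fin.last n) k)) *
      (Matrix.of (fun k j : Fin (n+1) => (W ^ (j : ℕ)) k (Fin.last n)))
      = Matrix.of (fun i j : Fin (n+1) =>
          (W ^ ((i : ℕ) + (j : ℕ))) (Fin.last n) (Fin.last n)) := by
    intro W
    ext i j
    rw [Matrix.mul_apply]
    simp only [Matrix.of_apply]
    rw [pow_add, Matrix.mul_apply]
  have hQP : Q * P = B := hQPgen Y
  -- map of Z'-powers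
  have hZ'pow : ∀ j : ℕ, (Z' ^ j).map f = Z ^ j := by
    intro j
    rw [← hZ'map]
    exact hmap_pow Z' j
  -- φ PZ = Gi * φ P
  have hPZmap : PZ.map f = Gi * P.map f := by
    ext k j
    rw [Matrix.map_apply]
    show f ((Z' ^ (j:ℕ)) k (Fin.last n)) = _
    have h1 : f ((Z' ^ (j:ℕ)) k (Fin.last n)) = (Z ^ (j:ℕ)) k (Fin.last n) := by
      rw [← hZ'pow]; rfl
    rw [h1, hZpow, hmulG, Matrix.mul_apply, Matrix.mul_apply]
    refine Finset.sum_congr rfl fun m _ => ?_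
    congr 1
    rw [Matrix.map_apply, hP]
    show ((Y.map f) ^ (j:ℕ)) m (Fin.last n) = f ((Y ^ (j:ℕ)) m (Fin.last n))
    rw [← hmap_pow]; rfl
  have hQZmap : QZ.map f = Q.map f * G := by
    ext i k
    rw [Matrix.map_apply]
    show f ((Z' ^ (i:ℕ)) (Fin.last n) k) = _
    have h1 : f ((Z' ^ (i:ℕ)) (Fin.last n) k) = (Z ^ (i:ℕ)) (Fin.last n) k := by
      rw [← hZ'pow]; rfl
    rw [h1, hZpow]
    rw [show Gi * (Y.map f) ^ (i:ℕ) * G = Gi * ((Y.map f) ^ (i:ℕ) * G) by simp only [mul_assoc], hGimul]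
    rw [Matrix.mul_apply, Matrix.mul_apply]
    refine Finset.sum_congr rfl fun m _ => ?_
    congr 1
    rw [Matrix.map_apply, hQ]
    show ((Y.map f) ^ (i:ℕ)) (Fin.last n) m = f ((Y ^ (i:ℕ)) (Fin.last n) m)
    rw [← hmap_pow]; rfl
  -- QZ * PZ = B
  have hQPZ : QZ * PZ = B := by
    apply Matrix.map_injective hfinj
    show (QZ * PZ).map f = B.map f
    rw [Matrix.map_mul, hPZmap, hQZmap, ← hQP, Matrix.map_mul]
    rw [show Q.map f * G * (Gi * P.map f) = Q.map f * (G * Gi) * P.map f by simp only [mul_assoc],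
      hGGi, mul_one]
  -- determinant facts
  have hdetQP : IsUnit (Q.det * P.det) := by
    rw [← Matrix.det_mul, hQP]; exact hreg
  have hdetP : IsUnit P.det := isUnit_of_mul_isUnit_right hdetQP
  have hdetPZ : IsUnit PZ.det := by
    have : IsUnit (QZ.det * PZ.det) := by
      rw [← Matrix.det_mul, hQPZ]; exact hreg
    exact isUnit_of_mul_isUnit_right this
  have hPunit : IsUnit P := (Matrix.isUnit_iff_isUnit_det P).mpr hdetP
  have hPZunit : IsUnit PZ := (Matrix.isUnit_iff_isUnit_det PZ).mpr hdetPZ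
  obtain ⟨uP, huP⟩ := hPunit
  obtain ⟨uPZ, huPZ⟩ := hPZunit
  -- G = map of W
  set W : Matrix (Fin (n+1)) (Fin (n+1)) O := ↑(uP * uPZ⁻¹) with hW
  have hGPZ : G * PZ.map f = P.map f := by
    rw [hPZmap, ← mul_assoc, hGGi, one_mul]
  have hinvmap : PZ.map f * (↑uPZ⁻¹ : Matrix (Fin (n+1)) (Fin (n+1)) O).map f = 1 := by
    rw [← Matrix.map_mul, ← huPZ, Units.mul_inv, Matrix.map_one f f.map_zero f.map_one]
  have hGW : G = W.map f := by
    calc G = G * (PZ.map f * (↑uPZ⁻¹ : Matrix (Fin (n+1)) (Fin (n+1)) O).map f) := by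
          rw [hinvmap, mul_one]
      _ = (G * PZ.map f) * (↑uPZ⁻¹ : Matrix (Fin (n+1)) (Fin (n+1)) O).map f := by
          rw [mul_assoc]
      _ = P.map f * (↑uPZ⁻¹ : Matrix (Fin (n+1)) (Fin (n+1)) O).map f := by rw [hGPZ]
      _ = W.map f := by rw [hW, Units.val_mul, Matrix.map_mul, huP]
  constructor
  · intro i j
    refine ⟨W (e (Sum.inl i)) (e (Sum.inl j)), ?_⟩
    have : G (e (Sum.inl i)) (e (Sum.inl j)) = (↑g : Matrix (Fin n) (Fin n) K) i j := by
      rw [hG, Matrix.reindex_apply, Matrix.submatrix_apply, Equiv.symm_apply_apply,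
        Equiv.symm_apply_apply]
      rfl
    rw [← this, hGW]
    rfl
  · have hWdet : IsUnit W.det := by
      have : IsUnit W := ⟨uP * uPZ⁻¹, rfl⟩
      exact (Matrix.isUnit_iff_isUnit_det W).mp this
    obtain ⟨u, hu⟩ := hWdet
    refine ⟨u, ?_⟩
    have hdetG : G.det = (↑g : Matrix (Fin n) (Fin n) K).det := by
      rw [hG, Matrix.reindex_apply, Matrix.det_submatrix_equiv_self,
        Matrix.det_fromBlocks_zero₂₁]
      simp
    rw [← hdetG, hGW, ← RingHom.mapMatrix_apply, ← RingHom.map_det, hu]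
end
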